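/- arXiv:2305.13671 — 6 statements merged into one kernel-verified Lean document; each statement's English description precedes it below -/
import Mathlib

section
/- For integers n ≥ 4 and 1 ≤ i ≤ n-2, the number of pairs (p, q), where p is a lattice path with n-1 unit steps ±1 starting at height i and q is a lattice path with n-1 unit steps ±1 ending at height 2n-2-i, such that the endpoint height of p is at least the start height of q, equals ∑_{j=0}^{i} ∑_{l=0}^{i-j} C(n-1, j) · C(n-1, l). -/
/-- Extend a finite integer sequence to `ℕ` by junk value `0` out of range. -/
def seqOf {n : ℕ} (y : Fin n → ℤ) : ℕ → ℤ := fun m => if h : m < n then y ⟨m, h⟩ else 0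

/-- `y` is a lattice path: consecutive entries differ by `±1`. -/
def IsPM {n : ℕ} (y : Fin n → ℤ) : Prop :=
  ∀ j : ℕ, j + 1 < n → (seqOf y (j + 1) = seqOf y j + 1 ∨ seqOf y (j + 1) = seqOf y j - 1)

namespace Aux

variable {m : ℕ}

def stepv (S : Finset (Fin m)) (j : ℕ) : ℤ :=
  if h : j < m then (if (⟨j, h⟩ : Fin m) ∈ S then 1 else -1) else 0

def psum (a : ℤ) (S : Finset (Fin m)) (k : ℕ) : ℤ := a + ∑ j ∈ Finset.range k, stepv S j

def pathOf (a : ℤ) (S : Finset (Fin m)) : Fin (m + 1) → ℤ := fun k => psum a S k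

lemma psum_zero (a : ℤ) (S : Finset (Fin m)) : psum a S 0 = a := by simp [psum]

lemma psum_succ (a : ℤ) (S : Finset (Fin m)) (k : ℕ) :
    psum a S (k + 1) = psum a S k + stepv S k := by
  simp [psum, Finset.sum_range_succ, add_assoc]

lemma seqOf_pathOf (a : ℤ) (S : Finset (Fin m)) (k : ℕ) (hk : k ≤ m) :
    seqOf (pathOf a S) k = psum a S k := by
  simp [seqOf, pathOf, Nat.lt_succ_of_le hk]

lemma isPM_pathOf (a : ℤ) (S : Finset (Fin m)) : IsPM (pathOf a S) := by
  intro j hj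
  have hj' : j < m := by omega
  rw [seqOf_pathOf a S (j + 1) hj', seqOf_pathOf a S j hj'.le, psum_succ]
  unfold stepv
  rw [dif_pos hj']
  split
  · left; ring
  · right; ring

lemma psum_top (a : ℤ) (S : Finset (Fin m)) :
    psum a S m = a + 2 * S.card - m := by
  have h1 : ∑ j ∈ Finset.range m, stepv S j = ∑ j : Fin m, (if j ∈ S then (1:ℤ) else -1) := by
    rw [← Fin.sum_univ_eq_sum_range]
    refine Finset.sum_congr rfl fun j _ => ?_
    simp [stepv, j.isLt]
  have h2 : ∀ j : Fin m, (if j ∈ S then (1:ℤ) else -1) = 2 * (if j ∈ S then (1:ℤ) else 0) - 1 := by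
    intro j; split <;> ring
  rw [psum, h1]
  simp_rw [h2]
  rw [Finset.sum_sub_distrib, ← Finset.mul_sum, Finset.sum_ite_mem, Finset.univ_inter,
    Finset.sum_const, Finset.sum_const, Finset.card_univ, Fintype.card_fin]
  ring

lemma pathOf_inj {a a' : ℤ} {S S' : Finset (Fin m)} (h : pathOf a S = pathOf a' S') :
    a = a' ∧ S = S' := by
  have hk : ∀ k : ℕ, k ≤ m → psum a S k = psum a' S' k := by
    intro k hkm
    have := congrFun h ⟨k, by omega⟩
    simpa [pathOf] using this
  have h0 : a = a' := by have := hk 0 (by omega); simpa [psum_zero] using this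
  refine ⟨h0, ?_⟩
  ext j
  have hs : stepv S j = stepv S' j := by
    have h1 := hk (j + 1) j.isLt
    have h2 := hk j j.isLt.le
    rw [psum_succ, psum_succ] at h1
    omega
  unfold stepv at hs
  rw [dif_pos j.isLt, dif_pos j.isLt] at hs
  simp only [Fin.eta] at hs
  constructor <;> intro hmem <;> by_contra hc <;> simp [hmem, hc] at hs

lemma exists_pathOf {y : Fin (m + 1) → ℤ} (hy : IsPM y) :
    ∃ S : Finset (Fin m), y = pathOf (seqOf y 0) S := by
  refine ⟨Finset.univ.filter (fun j : Fin m => seqOf y ((j : ℕ) + 1) = seqOf y (j : ℕ) + 1), ?_⟩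
  have key : ∀ k, k ≤ m →
      psum (seqOf y 0) (Finset.univ.filter
        (fun j : Fin m => seqOf y ((j : ℕ) + 1) = seqOf y (j : ℕ) + 1)) k = seqOf y k := by
    intro k
    induction k with
    | zero => intro _; simp [psum_zero]
    | succ k ih =>
      intro hk
      have hk' : k < m := by omega
      rw [psum_succ, ih (by omega)]
      unfold stepv
      rw [dif_pos hk']
      simp only [Finset.mem_filter, Finset.mem_univ, true_and]
      rcases hy k (by omega) with h | h
      · rw [if_pos h]; omega
      · rw [if_neg (by omega)]; omega
  funext k
  have h1 := key k (by omega)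
  have h2 : seqOf y (k : ℕ) = y k := by simp [seqOf, k.isLt]
  rw [h2] at h1
  simp [pathOf, h1]

end Aux

namespace Aux

lemma card_filter_card (m k : ℕ) :
    (Finset.univ.filter (fun S : Finset (Fin m) => S.card = k)).card = m.choose k := by
  rw [← Finset.powerset_univ, ← Finset.powersetCard_eq_filter, Finset.card_powersetCard,
    Finset.card_univ, Fintype.card_fin]

lemma count_pairs (m i : ℕ) (hi : i ≤ m) :
    (Finset.univ.filter (fun ST : Finset (Fin m) × Finset (Fin m) =>
        2 * m ≤ i + ST.1.card + ST.2.card)).card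
      = ∑ j ∈ Finset.range (i + 1), ∑ l ∈ Finset.range (i - j + 1),
          Nat.choose m j * Nat.choose m l := by
  classical
  have hmem : ∀ ST ∈ Finset.univ.filter (fun ST : Finset (Fin m) × Finset (Fin m) =>
      2 * m ≤ i + ST.1.card + ST.2.card),
      (m - ST.1.card, m - ST.2.card) ∈ Finset.range (i + 1) ×ˢ Finset.range (i + 1) := by
    intro ST hST
    simp only [Finset.mem_filter, Finset.mem_univ, true_and] at hST
    have h1 : ST.1.card ≤ m := by simpa using ST.1.card_le_univ
    have h2 : ST.2.card ≤ m := by simpa using ST.2.card_le_univ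
    simp only [Finset.mem_product, Finset.mem_range]
    omega
  rw [Finset.card_eq_sum_card_fiberwise hmem, Finset.sum_product]
  refine Finset.sum_congr rfl fun j hj => ?_
  simp only [Finset.mem_range] at hj
  have hfib : ∀ l, ((Finset.univ.filter (fun ST : Finset (Fin m) × Finset (Fin m) =>
        2 * m ≤ i + ST.1.card + ST.2.card)).filter
        (fun ST => (m - ST.1.card, m - ST.2.card) = (j, l))).card
      = if j + l ≤ i then m.choose j * m.choose l else 0 := by
    intro l
    rw [Finset.filter_filter]
    split
    · next hle =>
      have heq : (Finset.univ.filter (fun ST : Finset (Fin m) × Finset (Fin m) =>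
          (2 * m ≤ i + ST.1.card + ST.2.card) ∧ (m - ST.1.card, m - ST.2.card) = (j, l)))
          = Finset.univ.filter (fun ST : Finset (Fin m) × Finset (Fin m) =>
            ST.1.card = m - j ∧ ST.2.card = m - l) := by
        apply Finset.filter_congr
        intro ST _
        have h1 : ST.1.card ≤ m := by simpa using ST.1.card_le_univ
        have h2 : ST.2.card ≤ m := by simpa using ST.2.card_le_univ
        simp only [Prod.mk.injEq]
        constructor
        · rintro ⟨h3, h4, h5⟩; omega
        · rintro ⟨h3, h4⟩; omega
      rw [heq, ← Finset.univ_product_univ,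
        Finset.filter_product (fun S : Finset (Fin m) => S.card = m - j)
          (fun T : Finset (Fin m) => T.card = m - l), Finset.card_product,
        card_filter_card, card_filter_card,
        Nat.choose_symm (by omega : j ≤ m), Nat.choose_symm (by omega : l ≤ m)]
    · next hgt =>
      rw [Finset.card_eq_zero, Finset.filter_eq_empty_iff]
      intro ST _
      have h1 : ST.1.card ≤ m := by simpa using ST.1.card_le_univ
      have h2 : ST.2.card ≤ m := by simpa using ST.2.card_le_univ
      simp only [Prod.mk.injEq, not_and]
      intro h3 h4
      omega
  simp_rw [hfib]
  rw [← Finset.sum_filter]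
  congr 1
  ext l
  simp only [Finset.mem_filter, Finset.mem_range]
  omega

end Aux


/-- Lemma 4.1(1): the number of pairs `(p, q)` of lattice paths with `n-1` steps `±1`,
`p` starting at height `i`, `q` ending at height `2n-2-i`, with the endpoint of `p`
weakly above (≥) the start of `q`, equals
`∑_{j=0}^{i} ∑_{l=0}^{i-j} C(n-1,j) C(n-1,l)`. -/
theorem statement0 (n i : ℕ) (hn : 4 ≤ n) (hi1 : 1 ≤ i) (hi2 : i ≤ n - 2) :
    Nat.card {pq : (Fin n → ℤ) × (Fin n → ℤ) //
        IsPM pq.1 ∧ IsPM pq.2 ∧ seqOf pq.1 0 = (i : ℤ) ∧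
        seqOf pq.2 (n - 1) = 2 * (n : ℤ) - 2 - (i : ℤ) ∧
        seqOf pq.2 0 ≤ seqOf pq.1 (n - 1)} =
      ∑ j ∈ Finset.range (i + 1), ∑ l ∈ Finset.range (i - j + 1),
        Nat.choose (n - 1) j * Nat.choose (n - 1) l := by
  classical
  obtain ⟨m, rfl⟩ : ∃ m, n = m + 1 := ⟨n - 1, by omega⟩
  have hm : 3 ≤ m := by omega
  have him : i ≤ m := by omega
  have hsub : m + 1 - 1 = m := by omega
  let Small := {ST : Finset (Fin m) × Finset (Fin m) // 2 * m ≤ i + ST.1.card + ST.2.card}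
  let Big := {pq : (Fin (m + 1) → ℤ) × (Fin (m + 1) → ℤ) //
        IsPM pq.1 ∧ IsPM pq.2 ∧ seqOf pq.1 0 = (i : ℤ) ∧
        seqOf pq.2 (m + 1 - 1) = 2 * ((m : ℤ) + 1) - 2 - (i : ℤ) ∧
        seqOf pq.2 0 ≤ seqOf pq.1 (m + 1 - 1)}
  let F : Small → Big := fun ST =>
    ⟨(Aux.pathOf (i : ℤ) ST.1.1,
      Aux.pathOf (3 * (m : ℤ) - (i : ℤ) - 2 * ST.1.2.card) ST.1.2), by
      obtain ⟨⟨S, T⟩, hST⟩ := ST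
      have hS : S.card ≤ m := by simpa using S.card_le_univ
      have hT : T.card ≤ m := by simpa using T.card_le_univ
      refine ⟨Aux.isPM_pathOf _ _, Aux.isPM_pathOf _ _, ?_, ?_, ?_⟩
      · rw [Aux.seqOf_pathOf _ _ 0 (by omega), Aux.psum_zero]
      · rw [hsub, Aux.seqOf_pathOf _ _ m le_rfl, Aux.psum_top]; ring
      · rw [hsub, Aux.seqOf_pathOf _ _ 0 (by omega), Aux.psum_zero,
          Aux.seqOf_pathOf _ _ m le_rfl, Aux.psum_top]
        simp only at hST ⊢
        omega⟩
  have hbij : Function.Bijective F := by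
    constructor
    · rintro ⟨⟨S, T⟩, hST⟩ ⟨⟨S', T'⟩, hST'⟩ h
      have hv := congrArg (fun z : Big => z.1) h
      have h1 : Aux.pathOf (i : ℤ) S = Aux.pathOf (i : ℤ) S' := congrArg Prod.fst hv
      have h2 : Aux.pathOf (3 * (m : ℤ) - (i : ℤ) - 2 * T.card) T
          = Aux.pathOf (3 * (m : ℤ) - (i : ℤ) - 2 * T'.card) T' := congrArg Prod.snd hv
      obtain ⟨-, hSeq⟩ := Aux.pathOf_inj h1
      obtain ⟨-, hTeq⟩ := Aux.pathOf_inj h2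
      subst hSeq; subst hTeq; rfl
    · rintro ⟨⟨p, q⟩, hp, hq, h0, hend, hle⟩
      simp only at hp hq h0 hend hle
      obtain ⟨S, hS⟩ := Aux.exists_pathOf hp
      obtain ⟨T, hT⟩ := Aux.exists_pathOf hq
      rw [h0] at hS
      have hScard : S.card ≤ m := by simpa using S.card_le_univ
      have hTcard : T.card ≤ m := by simpa using T.card_le_univ
      set b : ℤ := seqOf q 0 with hb
      have hqend : seqOf q (m + 1 - 1) = b + 2 * T.card - m := by
        rw [hsub, hT, Aux.seqOf_pathOf _ _ m le_rfl, Aux.psum_top]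
      have hpend : seqOf p (m + 1 - 1) = (i : ℤ) + 2 * S.card - m := by
        rw [hsub, hS, Aux.seqOf_pathOf _ _ m le_rfl, Aux.psum_top]
      have hbval : b = 3 * (m : ℤ) - (i : ℤ) - 2 * T.card := by
        rw [hqend] at hend; omega
      have hcond : 2 * m ≤ i + S.card + T.card := by
        rw [hqend] at hend
        rw [hpend] at hle
        omega
      refine ⟨⟨(S, T), hcond⟩, ?_⟩
      apply Subtype.ext
      refine Prod.ext hS.symm ?_
      show Aux.pathOf (3 * (m : ℤ) - (i : ℤ) - 2 * T.card) T = q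
      rw [hT, hbval]
  have hN : Nat.card Big = Nat.card Small :=
    Nat.card_congr (Equiv.ofBijective F hbij).symm
  have hS2 : Nat.card Small = ∑ j ∈ Finset.range (i + 1), ∑ l ∈ Finset.range (i - j + 1),
      Nat.choose m j * Nat.choose m l := by
    rw [Nat.card_eq_fintype_card, Fintype.card_subtype, Aux.count_pairs m i him]
  simp only [Nat.add_sub_cancel]
  have := hN.trans hS2
  exact this
end

section
/- For integers n ≥ 4 and 1 ≤ i ≤ n-2, define M(n, i) = C(2n-2, i) + 2 · ∑_{j=0}^{i} ∑_{l=0}^{i-j-1} C(n-1, j) · C(n-1, l) (where the inner sum is empty when i-j-1 < 0). Then M(n, i) equals the total number of Laurent monomials (counted with multiplicity) assigned to paths in 𝒫_{i,0}, namely: each pair of lattice paths (p, q) as in the path model contributes 1 monomial if the endpoint of p equals the start of q, and 2 monomials if the endpoint of p is strictly above the start of q; the total count is ∑_{j=0}^{i} ∑_{l=0}^{i-j} C(n-1,j) C(n-1,l) + ∑_{j=0}^{i} ∑_{l=0}^{i-j-1} C(n-1,j) C(n-1,l), which equals M(n, i). -/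
/-- A path in `𝒫_{i,0}`: a pair of `±1`-step lattice paths, the left one starting at
height `i`, the right one ending at height `2n-2-i`, with the left endpoint weakly above
the right start at the fold `x = n-1`. -/
def PathPair (n i : ℕ) (pq : (Fin n → ℤ) × (Fin n → ℤ)) : Prop :=
  IsPM pq.1 ∧ IsPM pq.2 ∧ seqOf pq.1 0 = (i : ℤ) ∧
    seqOf pq.2 (n - 1) = 2 * (n : ℤ) - 2 - (i : ℤ) ∧ seqOf pq.2 0 ≤ seqOf pq.1 (n - 1)

open Finset

/-- Step function of a down-set `D`: `-1` on `D`, `+1` off `D`, junk `0` out of range. -/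
def bstep {m : ℕ} (D : Finset (Fin m)) (t : ℕ) : ℤ :=
  if h : t < m then (if (⟨t, h⟩ : Fin m) ∈ D then -1 else 1) else 0

/-- Decode a path from a start value and a down-set. -/
def decp (n : ℕ) (c : ℤ) (D : Finset (Fin (n - 1))) : Fin n → ℤ :=
  fun k => c + ∑ t ∈ Finset.range k.1, bstep D t

/-- Encode a path by its set of down-steps. -/
def encp {n : ℕ} (p : Fin n → ℤ) : Finset (Fin (n - 1)) :=
  Finset.univ.filter (fun k : Fin (n - 1) => seqOf p (k.1 + 1) = seqOf p k.1 - 1)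

lemma seqOf_decp {n : ℕ} (c : ℤ) (D : Finset (Fin (n - 1))) {j : ℕ} (hj : j < n) :
    seqOf (decp n c D) j = c + ∑ t ∈ Finset.range j, bstep D t := by
  simp [seqOf, decp, hj]

lemma isPM_decp {n : ℕ} (c : ℤ) (D : Finset (Fin (n - 1))) : IsPM (decp n c D) := by
  intro j hj
  have hj' : j < n := by omega
  have hjm : j < n - 1 := by omega
  rw [seqOf_decp c D hj, seqOf_decp c D hj', Finset.sum_range_succ]
  by_cases h : (⟨j, hjm⟩ : Fin (n - 1)) ∈ D
  · right; simp [bstep, hjm, h]; ring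
  · left; simp [bstep, hjm, h]; ring

lemma seqOf_eq_decp {n : ℕ} {p : Fin n → ℤ} (hp : IsPM p) :
    ∀ j, j < n → seqOf p j = seqOf p 0 + ∑ t ∈ Finset.range j, bstep (encp p) t := by
  intro j
  induction j with
  | zero => intro _; simp
  | succ j ih =>
    intro hj
    have hj' : j < n := by omega
    have hjm : j < n - 1 := by omega
    rw [Finset.sum_range_succ, ← add_assoc, ← ih hj']
    have hb : bstep (encp p) j =
        if seqOf p (j + 1) = seqOf p j - 1 then -1 else 1 := by
      simp [bstep, hjm, encp]
    rcases hp j hj with h | h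
    · rw [hb, if_neg (by omega), h]
    · rw [hb, if_pos h, h]; ring

lemma encp_decp {n : ℕ} (c : ℤ) (D : Finset (Fin (n - 1))) : encp (decp n c D) = D := by
  ext k
  have hk : k.1 < n - 1 := k.2
  have hk1 : k.1 + 1 < n := by omega
  have hk' : k.1 < n := by omega
  simp only [encp, Finset.mem_filter, Finset.mem_univ, true_and]
  rw [seqOf_decp c D hk1, seqOf_decp c D hk', Finset.sum_range_succ]
  have : bstep D k.1 = if k ∈ D then -1 else 1 := by simp [bstep, hk]
  rw [this]
  by_cases h : k ∈ D
  · simp [h]; ring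
  · simp [h]; intro he; omega

lemma total_bstep {m : ℕ} (D : Finset (Fin m)) :
    ∑ t ∈ Finset.range m, bstep D t = (m : ℤ) - 2 * D.card := by
  rw [← Fin.sum_univ_eq_sum_range]
  have : ∀ k : Fin m, bstep D k.1 = 1 - 2 * (if k ∈ D then (1 : ℤ) else 0) := by
    intro k
    simp only [bstep, k.2, dif_pos, Fin.eta]
    by_cases h : k ∈ D <;> simp [h]
  rw [Finset.sum_congr rfl (fun k _ => this k)]
  rw [Finset.sum_sub_distrib, ← Finset.mul_sum]
  simp [Finset.sum_ite_mem, Finset.card_univ]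

lemma vand (m k : ℕ) :
    ∑ j ∈ Finset.range (k + 1), m.choose j * m.choose (k - j) = (m + m).choose k := by
  rw [Nat.add_choose_eq, Finset.Nat.sum_antidiagonal_eq_sum_range_succ_mk]

lemma Dsum (m i : ℕ) :
    ∑ j ∈ Finset.range (i + 1), ∑ l ∈ Finset.range (i - j), m.choose j * m.choose l =
      ∑ k ∈ Finset.range i, (m + m).choose k := by
  induction i with
  | zero => simp
  | succ i ih =>
    rw [Finset.sum_range_succ]
    conv_rhs => rw [Finset.sum_range_succ]
    simp only [Nat.sub_self, Finset.range_zero, Finset.sum_empty, add_zero]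
    rw [← ih, ← vand, ← Finset.sum_add_distrib]
    refine Finset.sum_congr rfl fun j hj => ?_
    rw [Finset.mem_range] at hj
    have : i + 1 - j = (i - j) + 1 := by omega
    rw [this, Finset.sum_range_succ]

lemma card_finset_lt (γ : Type*) [Fintype γ] [DecidableEq γ] (i : ℕ) :
    Fintype.card {s : Finset γ // s.card < i} =
      ∑ k ∈ Finset.range i, (Fintype.card γ).choose k := by
  rw [Fintype.card_subtype]
  rw [Finset.card_eq_sum_card_fiberwise (f := Finset.card) (t := Finset.range i)
    (fun s hs => by simp at hs ⊢; omega)]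
  refine Finset.sum_congr rfl fun k hk => ?_
  rw [Finset.mem_range] at hk
  have : (Finset.univ.filter fun s : Finset γ => s.card < i).filter (fun s => s.card = k)
      = Finset.univ.filter fun s : Finset γ => s.card = k := by
    ext s; simp; omega
  rw [this, Finset.univ_filter_card_eq, Finset.card_powersetCard, Finset.card_univ]

/-- The main bijection: path pairs with a fold-height condition `P` correspond to
pairs of down-sets with the translated condition. -/
def pathPairEquiv (n i : ℕ) (hn : 4 ≤ n) (P : ℤ → ℤ → Prop)
    (hP : ∀ a b : ℤ, P a b → a ≤ b) :
    {pq : (Fin n → ℤ) × (Fin n → ℤ) //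
        PathPair n i pq ∧ P (seqOf pq.2 0) (seqOf pq.1 (n - 1))} ≃
      {UV : Finset (Fin (n - 1)) × Finset (Fin (n - 1)) //
        P ((n : ℤ) - 1 - (i : ℤ) + 2 * UV.2.card) ((i : ℤ) + (n : ℤ) - 1 - 2 * UV.1.card)} where
  toFun x := ⟨(encp x.1.1, encp x.1.2), by
    obtain ⟨⟨p, q⟩, ⟨hp, hq, h0, he, _⟩, hc⟩ := x
    dsimp only at hp hq h0 he hc ⊢
    have hn1 : n - 1 < n := by omega
    have ha := seqOf_eq_decp hp (n - 1) hn1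
    have hb := seqOf_eq_decp hq (n - 1) hn1
    rw [total_bstep] at ha hb
    have h1 : seqOf p (n - 1) = (i : ℤ) + (n : ℤ) - 1 - 2 * (encp p).card := by
      rw [h0] at ha; omega
    have h2 : seqOf q 0 = (n : ℤ) - 1 - (i : ℤ) + 2 * (encp q).card := by
      rw [he] at hb; omega
    rwa [h1, h2] at hc⟩
  invFun y := ⟨(decp n (i : ℤ) y.1.1,
      decp n ((n : ℤ) - 1 - (i : ℤ) + 2 * y.1.2.card) y.1.2), by
    obtain ⟨⟨U, V⟩, hc⟩ := y
    have h0n : 0 < n := by omega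
    have hn1 : n - 1 < n := by omega
    have hp0 : seqOf (decp n (i : ℤ) U) 0 = (i : ℤ) := by
      rw [seqOf_decp _ _ h0n]; simp
    have hpe : seqOf (decp n (i : ℤ) U) (n - 1) = (i : ℤ) + (n : ℤ) - 1 - 2 * U.card := by
      rw [seqOf_decp _ _ hn1, total_bstep]; omega
    have hq0 : seqOf (decp n ((n : ℤ) - 1 - (i : ℤ) + 2 * V.card) V) 0 =
        (n : ℤ) - 1 - (i : ℤ) + 2 * V.card := by
      rw [seqOf_decp _ _ h0n]; simp
    have hqe : seqOf (decp n ((n : ℤ) - 1 - (i : ℤ) + 2 * V.card) V) (n - 1) =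
        2 * (n : ℤ) - 2 - (i : ℤ) := by
      rw [seqOf_decp _ _ hn1, total_bstep]; omega
    refine ⟨⟨isPM_decp _ _, isPM_decp _ _, hp0, hqe, ?_⟩, ?_⟩
    · rw [hq0, hpe]; exact hP _ _ hc
    · rw [hq0, hpe]; exact hc⟩
  left_inv x := by
    obtain ⟨⟨p, q⟩, ⟨hp, hq, h0, he, hle⟩, hc⟩ := x
    dsimp only at hp hq h0 he hc ⊢
    have hn1 : n - 1 < n := by omega
    have hb := seqOf_eq_decp hq (n - 1) hn1
    rw [total_bstep] at hb
    have h2 : (n : ℤ) - 1 - (i : ℤ) + 2 * (encp q).card = seqOf q 0 := by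
      rw [he] at hb; omega
    apply Subtype.ext
    simp only [Prod.mk.injEq]
    constructor
    · funext k
      have hk := seqOf_eq_decp hp k.1 k.2
      rw [h0] at hk
      have : seqOf p k.1 = p k := by simp [seqOf, k.2]
      rw [← this, hk]; rfl
    · funext k
      have hk := seqOf_eq_decp hq k.1 k.2
      have : seqOf q k.1 = q k := by simp [seqOf, k.2]
      rw [← this, hk, ← h2]; rfl
  right_inv y := by
    obtain ⟨⟨U, V⟩, hc⟩ := y
    apply Subtype.ext
    simp only [Prod.mk.injEq]
    exact ⟨encp_decp _ _, encp_decp _ _⟩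

/-- Pairs of finsets with prescribed total cardinality vs subsets of a sum type. -/
def finsetPairEquiv (α β : Type*) [DecidableEq α] [DecidableEq β] (R : ℕ → Prop) :
    {UV : Finset α × Finset β // R (UV.1.card + UV.2.card)} ≃
      {W : Finset (α ⊕ β) // R W.card} where
  toFun UV := ⟨UV.1.1.disjSum UV.1.2, by rw [Finset.card_disjSum]; exact UV.2⟩
  invFun W := ⟨(W.1.toLeft, W.1.toRight), by
    rw [Finset.card_toLeft_add_card_toRight]; exact W.2⟩
  left_inv := fun ⟨⟨U, V⟩, h⟩ => by
    apply Subtype.ext; simp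
  right_inv := fun ⟨W, h⟩ => by
    apply Subtype.ext; simp [Finset.toLeft_disjSum_toRight]

lemma cardA (n i : ℕ) (hn : 4 ≤ n) :
    Nat.card {pq : (Fin n → ℤ) × (Fin n → ℤ) //
        PathPair n i pq ∧ seqOf pq.1 (n - 1) = seqOf pq.2 0} = (2 * n - 2).choose i := by
  have e1 : {pq : (Fin n → ℤ) × (Fin n → ℤ) //
        PathPair n i pq ∧ seqOf pq.1 (n - 1) = seqOf pq.2 0} ≃
      {UV : Finset (Fin (n - 1)) × Finset (Fin (n - 1)) //
        (i : ℤ) + (n : ℤ) - 1 - 2 * UV.1.card = (n : ℤ) - 1 - (i : ℤ) + 2 * UV.2.card} :=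
    pathPairEquiv n i hn (fun a b => b = a) (fun a b h => h.ge)
  have e2 : {UV : Finset (Fin (n - 1)) × Finset (Fin (n - 1)) //
        (i : ℤ) + (n : ℤ) - 1 - 2 * UV.1.card = (n : ℤ) - 1 - (i : ℤ) + 2 * UV.2.card} ≃
      {UV : Finset (Fin (n - 1)) × Finset (Fin (n - 1)) // UV.1.card + UV.2.card = i} :=
    Equiv.subtypeEquivRight (fun UV => by constructor <;> intro h <;> omega)
  have e3 := finsetPairEquiv (Fin (n - 1)) (Fin (n - 1)) (fun c => c = i)
  rw [Nat.card_congr ((e1.trans e2).trans e3), Nat.card_eq_fintype_card,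
    Fintype.card_finset_len, Fintype.card_sum, Fintype.card_fin]
  congr 1
  omega

lemma cardB (n i : ℕ) (hn : 4 ≤ n) :
    Nat.card {pq : (Fin n → ℤ) × (Fin n → ℤ) //
        PathPair n i pq ∧ seqOf pq.2 0 < seqOf pq.1 (n - 1)} =
      ∑ k ∈ Finset.range i, (2 * n - 2).choose k := by
  have e1 : {pq : (Fin n → ℤ) × (Fin n → ℤ) //
        PathPair n i pq ∧ seqOf pq.2 0 < seqOf pq.1 (n - 1)} ≃
      {UV : Finset (Fin (n - 1)) × Finset (Fin (n - 1)) //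
        (n : ℤ) - 1 - (i : ℤ) + 2 * UV.2.card < (i : ℤ) + (n : ℤ) - 1 - 2 * UV.1.card} :=
    pathPairEquiv n i hn (fun a b => a < b) (fun a b h => h.le)
  have e2 : {UV : Finset (Fin (n - 1)) × Finset (Fin (n - 1)) //
        (n : ℤ) - 1 - (i : ℤ) + 2 * UV.2.card < (i : ℤ) + (n : ℤ) - 1 - 2 * UV.1.card} ≃
      {UV : Finset (Fin (n - 1)) × Finset (Fin (n - 1)) // UV.1.card + UV.2.card < i} :=
    Equiv.subtypeEquivRight (fun UV => by constructor <;> intro h <;> omega)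
  have e3 := finsetPairEquiv (Fin (n - 1)) (Fin (n - 1)) (fun c => c < i)
  rw [Nat.card_congr ((e1.trans e2).trans e3), Nat.card_eq_fintype_card,
    card_finset_lt, Fintype.card_sum, Fintype.card_fin]
  refine Finset.sum_congr rfl fun k _ => ?_
  congr 1
  omega

/-- Theorem 4.2(1): `M(n,i) = C(2n-2,i) + 2 ∑_{j=0}^{i} ∑_{l=0}^{i-j-1} C(n-1,j)C(n-1,l)`
equals the number of Laurent monomials (with multiplicity) assigned to paths in `𝒫_{i,0}`:
each path pair with equal fold heights contributes one monomial, each with strictly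
separated fold heights contributes two; and the total count
`∑_{j=0}^{i} ∑_{l=0}^{i-j} C(n-1,j)C(n-1,l) + ∑_{j=0}^{i} ∑_{l=0}^{i-j-1} C(n-1,j)C(n-1,l)`
also equals `M(n,i)`. -/
theorem statement3 (n i : ℕ) (hn : 4 ≤ n) (hi1 : 1 ≤ i) (hi2 : i ≤ n - 2) :
    (Nat.card {pq : (Fin n → ℤ) × (Fin n → ℤ) //
          PathPair n i pq ∧ seqOf pq.1 (n - 1) = seqOf pq.2 0} +
        2 * Nat.card {pq : (Fin n → ℤ) × (Fin n → ℤ) //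
          PathPair n i pq ∧ seqOf pq.2 0 < seqOf pq.1 (n - 1)} =
      Nat.choose (2 * n - 2) i +
        2 * ∑ j ∈ Finset.range (i + 1), ∑ l ∈ Finset.range (i - j),
          Nat.choose (n - 1) j * Nat.choose (n - 1) l) ∧
    ((∑ j ∈ Finset.range (i + 1), ∑ l ∈ Finset.range (i - j + 1),
          Nat.choose (n - 1) j * Nat.choose (n - 1) l) +
        (∑ j ∈ Finset.range (i + 1), ∑ l ∈ Finset.range (i - j),
          Nat.choose (n - 1) j * Nat.choose (n - 1) l) =
      Nat.choose (2 * n - 2) i +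
        2 * ∑ j ∈ Finset.range (i + 1), ∑ l ∈ Finset.range (i - j),
          Nat.choose (n - 1) j * Nat.choose (n - 1) l) := by
  have h2m : (n - 1) + (n - 1) = 2 * n - 2 := by omega
  constructor
  · rw [cardA n i hn, cardB n i hn, Dsum, h2m]
  · have hT : ∀ j ∈ Finset.range (i + 1),
        ∑ l ∈ Finset.range (i - j + 1), (n - 1).choose j * (n - 1).choose l =
          (∑ l ∈ Finset.range (i - j), (n - 1).choose j * (n - 1).choose l) +
            (n - 1).choose j * (n - 1).choose (i - j) := fun j _ =>
      Finset.sum_range_succ _ _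
    rw [Finset.sum_congr rfl hT, Finset.sum_add_distrib, vand, h2m]
    omega
end

section
/- For integers n ≥ 4 and odd i with 1 ≤ i ≤ n-2, the identity ∑_{j=0}^{⌊i/2⌋} C(2n, i - 2j) = C(2n-2, i) + 2 · ∑_{j=0}^{i} ∑_{l=0}^{i-j-1} C(n-1, j) · C(n-1, l) holds, where empty sums are 0. -/
/-- Double Pascal: `C(2m+2, k+2) = C(2m,k+2) + 2 C(2m,k+1) + C(2m,k)`. -/
lemma doublePascal (m k : ℕ) :
    Nat.choose (2*m+2) (k+2) =
      Nat.choose (2*m) (k+2) + 2 * Nat.choose (2*m) (k+1) + Nat.choose (2*m) k := by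
  have h1 : 2*m+2 = (2*m+1)+1 := by ring
  rw [h1, Nat.choose_succ_succ, Nat.choose_succ_succ, Nat.choose_succ_succ]
  ring

/-- Telescoping: `∑_{j=0}^{s} C(2m+2, 2s+1-2j) = C(2m,2s+1) + 2 ∑_{k<2s+1} C(2m,k)`. -/
lemma helperB (m s : ℕ) :
    ∑ j ∈ Finset.range (s+1), Nat.choose (2*m+2) (2*s+1 - 2*j) =
      Nat.choose (2*m) (2*s+1) + 2 * ∑ k ∈ Finset.range (2*s+1), Nat.choose (2*m) k := by
  induction s with
  | zero => simp [Nat.choose_one_right]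
  | succ s ih =>
    rw [Finset.sum_range_succ' (fun j => Nat.choose (2*m+2) (2*(s+1)+1 - 2*j))]
    have hre : ∀ j ∈ Finset.range (s+1),
        Nat.choose (2*m+2) (2*(s+1)+1 - 2*(j+1)) = Nat.choose (2*m+2) (2*s+1 - 2*j) := by
      intro j _
      congr 1
      omega
    rw [Finset.sum_congr rfl hre, ih]
    have h1 : 2*(s+1)+1 - 2*0 = (2*s+1)+2 := by omega
    rw [h1, doublePascal]
    have h2 : 2*(s+1)+1 = (2*s+1)+1+1 := by omega
    rw [h2]
    conv_rhs => rw [Finset.sum_range_succ, Finset.sum_range_succ]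
    ring

/-- Vandermonde prefix sums: `∑_{k<N} C(2m,k) = ∑_{j<N} ∑_{l<N-j} C(m,j) C(m,l)`. -/
lemma helperA (m N : ℕ) :
    ∑ k ∈ Finset.range N, Nat.choose (2*m) k =
      ∑ j ∈ Finset.range N, ∑ l ∈ Finset.range (N - j),
        Nat.choose m j * Nat.choose m l := by
  induction N with
  | zero => simp
  | succ N ih =>
    rw [Finset.sum_range_succ, ih]
    have hv : Nat.choose (2*m) N = ∑ j ∈ Finset.range (N+1),
        Nat.choose m j * Nat.choose m (N - j) := by
      rw [two_mul, Nat.add_choose_eq, Finset.Nat.sum_antidiagonal_eq_sum_range_succ_mk]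
    rw [hv]
    rw [Finset.sum_range_succ (fun j => ∑ l ∈ Finset.range (N+1-j),
      Nat.choose m j * Nat.choose m l)]
    rw [Finset.sum_range_succ (fun j => Nat.choose m j * Nat.choose m (N - j))]
    have hre : ∀ j ∈ Finset.range N,
        ∑ l ∈ Finset.range (N+1-j), Nat.choose m j * Nat.choose m l =
        (∑ l ∈ Finset.range (N-j), Nat.choose m j * Nat.choose m l)
          + Nat.choose m j * Nat.choose m (N-j) := by
      intro j hj
      rw [Finset.mem_range] at hj
      have : N+1-j = (N-j)+1 := by omega
      rw [this, Finset.sum_range_succ]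
    rw [Finset.sum_congr rfl hre, Finset.sum_add_distrib]
    simp [Nat.sub_self]
    ring

/-- Corollary 4.3, odd case: for odd `i` with `1 ≤ i ≤ n-2`,
`∑_{j=0}^{⌊i/2⌋} C(2n, i-2j) = C(2n-2, i) + 2 ∑_{j=0}^{i} ∑_{l=0}^{i-j-1} C(n-1,j) C(n-1,l)`. -/
theorem statement4 (n i : ℕ) (hn : 4 ≤ n) (hi1 : 1 ≤ i) (hi2 : i ≤ n - 2) (hodd : Odd i) :
    ∑ j ∈ Finset.range (i / 2 + 1), Nat.choose (2 * n) (i - 2 * j) =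
      Nat.choose (2 * n - 2) i +
        2 * ∑ j ∈ Finset.range (i + 1), ∑ l ∈ Finset.range (i - j),
          Nat.choose (n - 1) j * Nat.choose (n - 1) l := by
  obtain ⟨s, hs⟩ := hodd
  subst hs
  set m := n - 1 with hm
  have h2n : 2 * n = 2 * m + 2 := by omega
  have h2n2 : 2 * n - 2 = 2 * m := by omega
  have hdiv : (2*s+1) / 2 = s := by omega
  have houter : ∑ j ∈ Finset.range (2*s+1 + 1), ∑ l ∈ Finset.range (2*s+1 - j),
        Nat.choose (n-1) j * Nat.choose (n-1) l =
      ∑ j ∈ Finset.range (2*s+1), ∑ l ∈ Finset.range (2*s+1 - j),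
        Nat.choose m j * Nat.choose m l := by
    rw [Finset.sum_range_succ]
    simp [Nat.sub_self]
    rfl
  rw [houter, h2n2, h2n, hdiv, ← helperA m (2*s+1)]
  exact helperB m s
end

section
/- For integers n ≥ 4 and even i with 2 ≤ i ≤ n-2, the identity ∑_{j=0}^{i/2} C(2n, i - 2j) = C(2n-2, i) + 2 · ∑_{j=0}^{i} ∑_{l=0}^{i-j-1} C(n-1, j) · C(n-1, l) holds, where empty sums are 0. -/
/-!
With `m = n - 1` and `i = 2k`: grouping the pairs `(j, l)` with `j + l < i` by `s = j + l`,
Vandermonde turns the double sum into `∑_{s < 2k} C(2m, s)`. Reflecting the left-hand side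
gives `∑_{j ≤ k} C(2m + 2, 2j)`, and the identity follows by induction on `k` from Pascal's
rule applied twice, `C(N + 2, r + 2) = C(N, r) + 2 C(N, r + 1) + C(N, r + 2)`.
-/

open Finset

namespace Nat

theorem sum_range_sum_range_sub_choose_mul_choose (a b i : ℕ) :
    ∑ j ∈ range (i + 1), ∑ l ∈ range (i - j), a.choose j * b.choose l =
      ∑ s ∈ range i, (a + b).choose s := by
  induction i with
  | zero => simp
  | succ i ih =>
    have hsplit : ∀ j ∈ range (i + 1),
        ∑ l ∈ range (i + 1 - j), a.choose j * b.choose l =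
          ∑ l ∈ range (i - j), a.choose j * b.choose l + a.choose j * b.choose (i - j) := by
      intro j hj
      rw [show i + 1 - j = i - j + 1 by grind, sum_range_succ]
    have hvandermonde : ∑ j ∈ range (i + 1), a.choose j * b.choose (i - j) = (a + b).choose i := by
      rw [add_choose_eq, Nat.sum_antidiagonal_eq_sum_range_succ_mk]
    rw [sum_range_succ, Nat.sub_self, sum_range_zero, add_zero, sum_congr rfl hsplit,
      sum_add_distrib, ih, hvandermonde, sum_range_succ]

theorem choose_add_two_add_two (N r : ℕ) :
    (N + 2).choose (r + 2) = N.choose r + 2 * N.choose (r + 1) + N.choose (r + 2) := by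
  rw [choose_succ_succ', choose_succ_succ', choose_succ_succ' N (r + 1)]
  ring

theorem sum_range_choose_add_two_two_mul (N k : ℕ) :
    ∑ j ∈ range (k + 1), (N + 2).choose (2 * j) =
      N.choose (2 * k) + 2 * ∑ s ∈ range (2 * k), N.choose s := by
  induction k with
  | zero => simp
  | succ k ih =>
    rw [sum_range_succ, ih, show 2 * (k + 1) = 2 * k + 2 by ring, choose_add_two_add_two,
      sum_range_succ, sum_range_succ]
    ring

end Nat

theorem statement5_general (n i : ℕ) (hn : 4 ≤ n) (heven : Even i) :
    ∑ j ∈ Finset.range (i / 2 + 1), Nat.choose (2 * n) (i - 2 * j) =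
      Nat.choose (2 * n - 2) i +
        2 * ∑ j ∈ Finset.range (i + 1), ∑ l ∈ Finset.range (i - j),
          Nat.choose (n - 1) j * Nat.choose (n - 1) l := by
  obtain ⟨k, rfl⟩ := heven
  have hreflect : ∑ j ∈ range (k + 1), (2 * n).choose (k + k - 2 * j) =
      ∑ j ∈ range (k + 1), (2 * n).choose (2 * j) := by
    rw [← sum_range_reflect]
    exact sum_congr rfl fun j hj => by rw [mem_range] at hj; congr 1; omega
  rw [show (k + k) / 2 = k by omega, hreflect, show 2 * n = n - 1 + (n - 1) + 2 by omega,
    Nat.add_sub_cancel, ← two_mul k,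
    Nat.sum_range_sum_range_sub_choose_mul_choose, Nat.sum_range_choose_add_two_two_mul]

/-- Corollary 4.3, even case: for even `i` with `2 ≤ i ≤ n-2`,
`∑_{j=0}^{i/2} C(2n, i-2j) = C(2n-2, i) + 2 ∑_{j=0}^{i} ∑_{l=0}^{i-j-1} C(n-1,j) C(n-1,l)`. -/
theorem statement5 (n i : ℕ) (hn : 4 ≤ n) (hi1 : 2 ≤ i) (hi2 : i ≤ n - 2) (heven : Even i) :
    ∑ j ∈ Finset.range (i / 2 + 1), Nat.choose (2 * n) (i - 2 * j) =
      Nat.choose (2 * n - 2) i +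
        2 * ∑ j ∈ Finset.range (i + 1), ∑ l ∈ Finset.range (i - j),
          Nat.choose (n - 1) j * Nat.choose (n - 1) l :=
  statement5_general n i hn heven
end

section
/- Let n ≥ 4 and let i ∈ {1, ..., n-2}. The number of paths in 𝒫_{i,0} assigned a binomial (two monomials) is ∑_{j=0}^{i} ∑_{l=0}^{i-j-1} C(n-1, j) · C(n-1, l), and the number of paths assigned a single monomial is C(2n-2, i); consequently |𝒫_{i,0}| = C(2n-2, i) + ∑_{j=0}^{i} ∑_{l=0}^{i-j-1} C(n-1, j) C(n-1, l). -/
open Finset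

section

variable {α : Type*} [Fintype α]

theorem card_filter_card_mem (D : Finset (ℕ × ℕ)) :
    #{ST : Finset α × Finset α | (#ST.1, #ST.2) ∈ D} =
      ∑ p ∈ D, (Fintype.card α).choose p.1 * (Fintype.card α).choose p.2 := by
  rw [card_eq_sum_card_fiberwise (f := fun ST : Finset α × Finset α => (#ST.1, #ST.2))
    (s := {ST | (#ST.1, #ST.2) ∈ D}) (t := D) fun ST h => (mem_filter.1 h).2]
  refine sum_congr rfl fun p hp => ?_
  rw [← card_univ, ← card_powersetCard, ← card_powersetCard, ← card_product]
  congr 1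
  ext ⟨S, T⟩
  simp only [mem_filter, mem_univ, true_and, mem_product, mem_powersetCard, subset_univ]
  constructor
  · rintro ⟨-, rfl⟩; exact ⟨rfl, rfl⟩
  · rintro ⟨hS, hT⟩
    obtain rfl : (#S, #T) = p := Prod.ext hS hT
    exact ⟨hp, rfl⟩

theorem card_filter_card_add_eq (k : ℕ) :
    #{ST : Finset α × Finset α | #ST.1 + #ST.2 = k} =
      (Fintype.card α + Fintype.card α).choose k := by
  simpa only [HasAntidiagonal.mem_antidiagonal, ← Nat.add_choose_eq] using
    card_filter_card_mem (α := α) (antidiagonal k)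

theorem card_filter_card_add_lt (k : ℕ) :
    #{ST : Finset α × Finset α | #ST.1 + #ST.2 < k} =
      ∑ j ∈ range (k + 1), ∑ l ∈ range (k - j),
        (Fintype.card α).choose j * (Fintype.card α).choose l := by
  have hD : ∀ p : ℕ × ℕ, p ∈ {p ∈ range (k + 1) ×ˢ range k | p.1 + p.2 < k} ↔
      p.1 ∈ range (k + 1) ∧ p.2 ∈ range (k - p.1) := by
    intro p
    simp only [mem_filter, mem_product, mem_range]
    omega
  rw [← sum_finset_product' _ _ _ hD
    (f := fun j l => (Fintype.card α).choose j * (Fintype.card α).choose l),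
    ← card_filter_card_mem]
  congr 1
  ext ST
  simp only [mem_filter, mem_univ, true_and, mem_product, mem_range]
  omega

theorem card_filter_card_add_le [DecidableEq α] (k : ℕ) :
    #{ST : Finset α × Finset α | #ST.1 + #ST.2 ≤ k} =
      (Fintype.card α + Fintype.card α).choose k +
        ∑ j ∈ range (k + 1), ∑ l ∈ range (k - j),
          (Fintype.card α).choose j * (Fintype.card α).choose l := by
  rw [← card_filter_card_add_eq, ← card_filter_card_add_lt, ← card_union_of_disjoint
    (disjoint_filter.2 fun _ _ h => h.not_lt), ← filter_or]
  simp only [le_iff_eq_or_lt]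

end

namespace LatticePath

section

variable {N : ℕ}

def step (S : Finset (Fin N)) (j : ℕ) : ℤ :=
  if hj : j < N then (if ⟨j, hj⟩ ∈ S then -1 else 1) else 0

def pathOf (c : ℤ) (S : Finset (Fin N)) : Fin (N + 1) → ℤ :=
  fun k => c + ∑ j ∈ range k, step S j

def downSet (p : Fin (N + 1) → ℤ) : Finset (Fin N) :=
  {j | seqOf p (j + 1) = seqOf p j - 1}

theorem step_of_lt (S : Finset (Fin N)) {j : ℕ} (hj : j < N) :
    step S j = if ⟨j, hj⟩ ∈ S then -1 else 1 :=
  dif_pos hj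

theorem step_eq_neg_one_iff (S : Finset (Fin N)) {j : ℕ} (hj : j < N) :
    step S j = -1 ↔ ⟨j, hj⟩ ∈ S := by
  rw [step_of_lt S hj]; split_ifs with h <;> simp [h]

theorem sum_range_step (S : Finset (Fin N)) : ∑ j ∈ range N, step S j = N - 2 * #S := by
  rw [← Fin.sum_univ_eq_sum_range (step S)]
  simp only [step, Fin.is_lt, dif_pos, Fin.eta, sum_ite, sum_const,
    filter_mem_eq_of_subset (subset_univ S), filter_not, ← compl_eq_univ_sdiff, card_compl,
    Fintype.card_fin, nsmul_eq_mul]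
  have := S.card_le_univ.trans_eq (Fintype.card_fin N)
  omega

theorem seqOf_pathOf (c : ℤ) (S : Finset (Fin N)) {m : ℕ} (hm : m ≤ N) :
    seqOf (pathOf c S) m = c + ∑ j ∈ range m, step S j := by
  simp [seqOf, pathOf, Nat.lt_succ_of_le hm]

theorem seqOf_pathOf_zero (c : ℤ) (S : Finset (Fin N)) : seqOf (pathOf c S) 0 = c := by
  simp [seqOf_pathOf c S (Nat.zero_le N)]

theorem seqOf_pathOf_last (c : ℤ) (S : Finset (Fin N)) :
    seqOf (pathOf c S) N = c + N - 2 * #S := by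
  rw [seqOf_pathOf c S le_rfl, sum_range_step, add_sub_assoc]

theorem seqOf_pathOf_succ (c : ℤ) (S : Finset (Fin N)) {j : ℕ} (hj : j < N) :
    seqOf (pathOf c S) (j + 1) = seqOf (pathOf c S) j + step S j := by
  rw [seqOf_pathOf c S hj, seqOf_pathOf c S hj.le, sum_range_succ, add_assoc]

theorem isPM_pathOf (c : ℤ) (S : Finset (Fin N)) : IsPM (pathOf c S) := by
  intro j hj
  rw [seqOf_pathOf_succ c S (Nat.succ_lt_succ_iff.1 hj), step_of_lt S (Nat.succ_lt_succ_iff.1 hj)]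
  split_ifs
  · exact Or.inr (sub_eq_add_neg _ _).symm
  · exact Or.inl rfl

theorem downSet_pathOf (c : ℤ) (S : Finset (Fin N)) : downSet (pathOf c S) = S := by
  ext j
  rw [downSet, mem_filter, seqOf_pathOf_succ c S j.isLt, ← step_eq_neg_one_iff S j.isLt]
  simp only [mem_univ, true_and]
  omega

theorem seqOf_succ_of_isPM {p : Fin (N + 1) → ℤ} (hp : IsPM p) {j : ℕ} (hj : j < N) :
    seqOf p (j + 1) = seqOf p j + step (downSet p) j := by
  have hmem : ⟨j, hj⟩ ∈ downSet p ↔ seqOf p (j + 1) = seqOf p j - 1 := by simp [downSet]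
  rw [step_of_lt _ hj]
  split_ifs with h
  · rw [hmem.1 h, sub_eq_add_neg]
  · exact (hp j (by omega)).resolve_right (mt hmem.2 h)

theorem pathOf_downSet {p : Fin (N + 1) → ℤ} (hp : IsPM p) :
    pathOf (seqOf p 0) (downSet p) = p := by
  have h : ∀ m ≤ N, seqOf p m = seqOf (pathOf (seqOf p 0) (downSet p)) m := by
    intro m hm
    induction m with
    | zero => rw [seqOf_pathOf_zero]
    | succ m ih => rw [seqOf_succ_of_isPM hp hm, seqOf_pathOf_succ _ _ hm, ih (by omega)]
  funext k
  simpa [seqOf, k.isLt] using (h k (Nat.lt_succ_iff.1 k.isLt)).symm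

theorem seqOf_last_of_isPM {p : Fin (N + 1) → ℤ} (hp : IsPM p) :
    seqOf p N = seqOf p 0 + N - 2 * #(downSet p) := by
  conv_lhs => rw [← pathOf_downSet hp]
  exact seqOf_pathOf_last _ _

end

theorem pathPair_fold_heights {N i : ℕ} {pq : (Fin (N + 1) → ℤ) × (Fin (N + 1) → ℤ)}
    (h : PathPair (N + 1) i pq) :
    seqOf pq.1 N = i + N - 2 * #(downSet pq.1) ∧ seqOf pq.2 0 = N - i + 2 * #(downSet pq.2) := by
  obtain ⟨hp, hq, h0, hN, -⟩ := h
  have hq' := seqOf_last_of_isPM hq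
  rw [Nat.add_sub_cancel] at hN
  exact ⟨by rw [seqOf_last_of_isPM hp, h0], by omega⟩

def foldEquiv (N i : ℕ) (R : ℤ → ℤ → Prop) :
    {pq : (Fin (N + 1) → ℤ) × (Fin (N + 1) → ℤ) //
        PathPair (N + 1) i pq ∧ R (seqOf pq.1 N) (seqOf pq.2 0)} ≃
      {ST : Finset (Fin N) × Finset (Fin N) //
        #ST.1 + #ST.2 ≤ i ∧ R (i + N - 2 * #ST.1) (N - i + 2 * #ST.2)} where
  toFun pq := ⟨(downSet pq.1.1, downSet pq.1.2), by
    obtain ⟨h, hR⟩ := pq.2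
    obtain ⟨h₁, h₂⟩ := pathPair_fold_heights h
    have hle := h.2.2.2.2
    rw [Nat.add_sub_cancel, h₁, h₂] at hle
    rw [h₁, h₂] at hR
    exact ⟨by dsimp only; omega, hR⟩⟩
  invFun ST := ⟨(pathOf i ST.1.1, pathOf (N - i + 2 * #ST.1.2) ST.1.2), by
    obtain ⟨hle, hR⟩ := ST.2
    refine ⟨⟨isPM_pathOf _ _, isPM_pathOf _ _, seqOf_pathOf_zero _ _, ?_, ?_⟩, ?_⟩ <;>
      simp only [Nat.add_sub_cancel, seqOf_pathOf_last, seqOf_pathOf_zero]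
    · push_cast; ring
    · omega
    · exact hR⟩
  left_inv pq := by
    obtain ⟨⟨p, q⟩, h, -⟩ := pq
    obtain ⟨-, h₂⟩ := pathPair_fold_heights h
    refine Subtype.ext (Prod.ext ?_ ?_)
    · conv_rhs => rw [← pathOf_downSet h.1, h.2.2.1]
    · conv_rhs => rw [← pathOf_downSet h.2.1, h₂]
  right_inv ST := Subtype.ext (Prod.ext (downSet_pathOf _ _) (downSet_pathOf _ _))

theorem card_pathPair_fold (N i : ℕ) (R : ℤ → ℤ → Prop) [DecidableRel R] :
    Nat.card {pq : (Fin (N + 1) → ℤ) × (Fin (N + 1) → ℤ) //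
        PathPair (N + 1) i pq ∧ R (seqOf pq.1 N) (seqOf pq.2 0)} =
      #{ST : Finset (Fin N) × Finset (Fin N) |
        #ST.1 + #ST.2 ≤ i ∧ R (i + N - 2 * #ST.1) (N - i + 2 * #ST.2)} := by
  rw [Nat.card_congr (foldEquiv N i R), Nat.card_eq_fintype_card, Fintype.card_subtype]

theorem card_pathPair_fold_lt (N i : ℕ) :
    Nat.card {pq : (Fin (N + 1) → ℤ) × (Fin (N + 1) → ℤ) //
        PathPair (N + 1) i pq ∧ seqOf pq.2 0 < seqOf pq.1 N} =
      ∑ j ∈ range (i + 1), ∑ l ∈ range (i - j), N.choose j * N.choose l := by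
  calc _ = #{ST : Finset (Fin N) × Finset (Fin N) | #ST.1 + #ST.2 < i} :=
        (card_pathPair_fold N i fun h₁ h₂ => h₂ < h₁).trans
          (congrArg card (filter_congr fun _ _ => by omega))
    _ = _ := by simpa only [Fintype.card_fin] using card_filter_card_add_lt (α := Fin N) i

theorem card_pathPair_fold_eq (N i : ℕ) :
    Nat.card {pq : (Fin (N + 1) → ℤ) × (Fin (N + 1) → ℤ) //
        PathPair (N + 1) i pq ∧ seqOf pq.1 N = seqOf pq.2 0} = (N + N).choose i := by
  calc _ = #{ST : Finset (Fin N) × Finset (Fin N) | #ST.1 + #ST.2 = i} :=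
        (card_pathPair_fold N i fun h₁ h₂ => h₁ = h₂).trans
          (congrArg card (filter_congr fun _ _ => by omega))
    _ = _ := by simpa only [Fintype.card_fin] using card_filter_card_add_eq (α := Fin N) i

theorem card_pathPair (N i : ℕ) :
    Nat.card {pq : (Fin (N + 1) → ℤ) × (Fin (N + 1) → ℤ) // PathPair (N + 1) i pq} =
      (N + N).choose i +
        ∑ j ∈ range (i + 1), ∑ l ∈ range (i - j), N.choose j * N.choose l := by
  have h := card_pathPair_fold N i fun _ _ => True
  simp only [and_true] at h
  simpa only [h, Fintype.card_fin] using card_filter_card_add_le (α := Fin N) i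

end LatticePath

theorem statement14_general (n i : ℕ) (hn : 4 ≤ n) :
    (Nat.card {pq : (Fin n → ℤ) × (Fin n → ℤ) //
          PathPair n i pq ∧ seqOf pq.2 0 < seqOf pq.1 (n - 1)} =
        ∑ j ∈ Finset.range (i + 1), ∑ l ∈ Finset.range (i - j),
          Nat.choose (n - 1) j * Nat.choose (n - 1) l) ∧
    (Nat.card {pq : (Fin n → ℤ) × (Fin n → ℤ) //
          PathPair n i pq ∧ seqOf pq.1 (n - 1) = seqOf pq.2 0} =
        Nat.choose (2 * n - 2) i) ∧
    (Nat.card {pq : (Fin n → ℤ) × (Fin n → ℤ) // PathPair n i pq} =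
        Nat.choose (2 * n - 2) i +
          ∑ j ∈ Finset.range (i + 1), ∑ l ∈ Finset.range (i - j),
            Nat.choose (n - 1) j * Nat.choose (n - 1) l) := by
  obtain ⟨N, rfl⟩ : ∃ N, n = N + 1 := ⟨n - 1, by omega⟩
  simp only [Nat.add_sub_cancel, show 2 * (N + 1) - 2 = N + N by omega]
  exact ⟨LatticePath.card_pathPair_fold_lt N i, LatticePath.card_pathPair_fold_eq N i,
    LatticePath.card_pathPair N i⟩

/-- The refined count behind Theorem 4.2(1): the number of paths in `𝒫_{i,0}` assigned a
binomial (fold heights strictly separated, `h₁ > h₂`) is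
`∑_{j=0}^{i} ∑_{l=0}^{i-j-1} C(n-1,j)C(n-1,l)`; the number of paths assigned a single
monomial (`h₁ = h₂`) is `C(2n-2,i)`; consequently `|𝒫_{i,0}|` is the sum of the two. -/
theorem statement14 (n i : ℕ) (hn : 4 ≤ n) (hi1 : 1 ≤ i) (hi2 : i ≤ n - 2) :
    (Nat.card {pq : (Fin n → ℤ) × (Fin n → ℤ) //
          PathPair n i pq ∧ seqOf pq.2 0 < seqOf pq.1 (n - 1)} =
        ∑ j ∈ Finset.range (i + 1), ∑ l ∈ Finset.range (i - j),
          Nat.choose (n - 1) j * Nat.choose (n - 1) l) ∧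
    (Nat.card {pq : (Fin n → ℤ) × (Fin n → ℤ) //
          PathPair n i pq ∧ seqOf pq.1 (n - 1) = seqOf pq.2 0} =
        Nat.choose (2 * n - 2) i) ∧
    (Nat.card {pq : (Fin n → ℤ) × (Fin n → ℤ) // PathPair n i pq} =
        Nat.choose (2 * n - 2) i +
          ∑ j ∈ Finset.range (i + 1), ∑ l ∈ Finset.range (i - j),
            Nat.choose (n - 1) j * Nat.choose (n - 1) l) :=
  statement14_general n i hn
end

section
/- For every n ≥ 4 and every pair (i, k) with 1 ≤ i ≤ n-2 and i - k odd, the multiset of Laurent monomials {m(p) : p ∈ 𝒫_{i,k}} contains exactly one dominant monomial, namely Y_{i,k} (a product of nonnegative powers of the variables Y), and exactly one anti-dominant monomial, namely Y^{-1}_{i, 2n-2+k}; the dominant monomial arises from the unique highest path p⁺_{i,k} and the anti-dominant monomial from the unique lowest path p⁻_{i,k}. -/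
/-- Exponent vectors of Laurent monomials in the variables `Y_{j,ℓ}` (`j` a node of the
Dynkin diagram, `ℓ ∈ ℤ` a spectral parameter). -/
abbrev ExpVec : Type := (ℕ × ℤ) →₀ ℤ

/-- A path in `𝒫_{i,k}` (for `i ≤ n-2`): a left half-path `L` on `x = 0, …, n-1` with
`L 0 = i + k`, and a right half-path `R` on `x = n-1, …, 2n-2` with
`R (n-1) = 2n-2-i+k`, each with `±1` steps, the left endpoint weakly above the right
start at the fold `x = n-1` (heights measured downwards, so "above" is `≥` is reversed:
the condition is `R 0 ≤ L (n-1)` in the row-label coordinates of the paper). -/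
def PathCond (n i : ℕ) (k : ℤ) (LR : (Fin n → ℤ) × (Fin n → ℤ)) : Prop :=
  IsPM LR.1 ∧ IsPM LR.2 ∧ seqOf LR.1 0 = (i : ℤ) + k ∧
    seqOf LR.2 (n - 1) = 2 * (n : ℤ) - 2 - (i : ℤ) + k ∧
    seqOf LR.2 0 ≤ seqOf LR.1 (n - 1)

/-- Corner sign of a path at position `r`: `+1` for an upper corner
(`y_{r-1} = y_r + 1 = y_{r+1}`), `-1` for a lower corner, `0` otherwise. -/
def cornerSign (f : ℕ → ℤ) (r : ℕ) : ℤ :=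
  if f (r - 1) = f r + 1 ∧ f (r + 1) = f r + 1 then 1
  else if f (r - 1) = f r - 1 ∧ f (r + 1) = f r - 1 then -1 else 0

/-- The non-fold part of the exponent vector of `m(p)`: the product over the corners of
`p` away from `x = n-1` of `Y_{j̄,ℓ}^{±1}` (node `r` on the left half, node `n-1-t` on
the right half, spectral parameter the height of the corner). -/
noncomputable def baseMon (n : ℕ) (LR : (Fin n → ℤ) × (Fin n → ℤ)) : ExpVec :=
  (∑ r ∈ Finset.Icc 1 (n - 2),
      cornerSign (seqOf LR.1) r • Finsupp.single (r, seqOf LR.1 r) (1 : ℤ)) +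
  (∑ t ∈ Finset.Icc 1 (n - 2),
      cornerSign (seqOf LR.2) t • Finsupp.single (n - 1 - t, seqOf LR.2 t) (1 : ℤ))

/-- The fold factor `Z` of `m(p)` (Equation (5) of the paper), as a multiset of exponent
vectors: a single monomial in the coincident cases (5), (6) and the straight-through
case, and a binomial (two monomials) in the separated cases (1)–(4), with the
distribution of the nodes `n-1`, `n` over the two fold heights governed by
`(ℓ₂ - ℓ₁) mod 4` and the travelling direction of the path. -/
noncomputable def zMon (n : ℕ) (LR : (Fin n → ℤ) × (Fin n → ℤ)) : Multiset ExpVec :=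
  let L := seqOf LR.1
  let R := seqOf LR.2
  let h₁ := L (n - 1)
  let h₂ := R 0
  let d₁ := h₁ - L (n - 2)
  let d₂ := R 1 - h₂
  if h₁ = h₂ then
    (if d₁ = -1 ∧ d₂ = 1 then
        {Finsupp.single (n - 1, h₁) (1 : ℤ) + Finsupp.single (n, h₁) (1 : ℤ)}
      else if d₁ = 1 ∧ d₂ = -1 then
        {-(Finsupp.single (n - 1, h₁) (1 : ℤ)) - Finsupp.single (n, h₁) (1 : ℤ)}
      else ({0} : Multiset ExpVec))
  else
    (if (d₁ = d₂ ∧ (h₁ - h₂) % 4 = 2) ∨ (d₁ ≠ d₂ ∧ (h₁ - h₂) % 4 = 0) then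
        {d₂ • Finsupp.single (n - 1, h₂) (1 : ℤ) + (-d₁) • Finsupp.single (n, h₁) (1 : ℤ),
         d₂ • Finsupp.single (n, h₂) (1 : ℤ) + (-d₁) • Finsupp.single (n - 1, h₁) (1 : ℤ)}
      else
        {d₂ • Finsupp.single (n - 1, h₂) (1 : ℤ) + (-d₁) • Finsupp.single (n - 1, h₁) (1 : ℤ),
         d₂ • Finsupp.single (n, h₂) (1 : ℤ) + (-d₁) • Finsupp.single (n, h₁) (1 : ℤ)})

/-- The multiset of exponent vectors of the Laurent monomials of `m(p)` (one element for
a monomial, two for a binomial). -/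
noncomputable def mMon (n : ℕ) (LR : (Fin n → ℤ) × (Fin n → ℤ)) : Multiset ExpVec :=
  (zMon n LR).map (fun z => baseMon n LR + z)

/-- A monomial is dominant iff all exponents are nonnegative. -/
def Dominant (e : ExpVec) : Prop := ∀ x, 0 ≤ e x

/-- A monomial is anti-dominant iff all exponents are nonpositive. -/
def AntiDominant (e : ExpVec) : Prop := ∀ x, e x ≤ 0

/-!
If `m(p)` is dominant, every lower corner `Y⁻¹_{j,ℓ}` on one half of `p` is cancelled by an
upper corner at the same node and height on the other half, and the fold factor excludes a
lower corner at the fold and, when the path goes straight through, a gap between the halves.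
With `f`, `g` the two halves and `N = n - 1`, the total corner sign at node `j` is half the
second difference of `x ↦ f x + g (N - x)`, so this function is convex, and the fold makes it
nonincreasing. A cancelling pair makes it flat from there to the fold, which puts the corner at
the height where the halves meet; but then the highest point between the cancelling upper
corner and the fold is a lower corner strictly above that height. So there are no lower
corners, both halves are valleys, and the endpoint and fold conditions leave only `p⁺_{i,k}`,
whose monomial is `Y_{i,k}`.

Reflecting a path about the fold and negating heights maps `𝒫_{i,k}` onto `𝒫_{i,2-2n-k}` and
`m(p)` to its image under `Y_{j,ℓ} ↦ Y_{j,-ℓ}⁻¹`; this turns the anti-dominant case into the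
dominant one.
-/

def HasUnitSteps (f : ℕ → ℤ) (N : ℕ) : Prop :=
  ∀ x < N, f (x + 1) = f x + 1 ∨ f (x + 1) = f x - 1

theorem two_mul_cornerSign {f : ℕ → ℤ} {r : ℕ} (h₁ : f r = f (r - 1) + 1 ∨ f r = f (r - 1) - 1)
    (h₂ : f (r + 1) = f r + 1 ∨ f (r + 1) = f r - 1) :
    2 * cornerSign f r = f (r + 1) - 2 * f r + f (r - 1) := by
  unfold cornerSign
  split_ifs <;> omega

namespace HasUnitSteps

variable {f : ℕ → ℤ} {N : ℕ}

theorem of_succ (hf : HasUnitSteps f (N + 1)) : HasUnitSteps f N :=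
  fun x hx => hf x (by omega)

theorem step_pred (hf : HasUnitSteps f N) {r : ℕ} (hr : 1 ≤ r) (hrN : r ≤ N) :
    f r = f (r - 1) + 1 ∨ f r = f (r - 1) - 1 := by
  simpa [Nat.sub_add_cancel hr] using hf (r - 1) (by omega)

theorem two_mul_cornerSign (hf : HasUnitSteps f N) {r : ℕ} (hr : 1 ≤ r) (hrN : r < N) :
    2 * cornerSign f r = f (r + 1) - 2 * f r + f (r - 1) :=
  _root_.two_mul_cornerSign (hf.step_pred hr hrN.le) (hf r hrN)

theorem exists_cornerSign_eq_neg_one (hf : HasUnitSteps f N) {a y b : ℕ} (hay : a ≤ y)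
    (hyb : y ≤ b) (hbN : b ≤ N) (ha : f a < f y) (hb : f b < f y) :
    ∃ x, a < x ∧ x < b ∧ cornerSign f x = -1 ∧ f b < f x := by
  obtain ⟨x, hx, hmax⟩ := Finset.exists_max_image (Finset.Icc a b) f ⟨y, by simp [hay, hyb]⟩
  rw [Finset.mem_Icc] at hx
  have hyx := hmax y (by simp [hay, hyb])
  have hax : a < x := lt_of_le_of_ne hx.1 (by rintro rfl; omega)
  have hxb : x < b := lt_of_le_of_ne hx.2 (by rintro rfl; omega)
  have hleft := hmax (x - 1) (by simp; omega)
  have hright := hmax (x + 1) (by simp; omega)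
  have h2c := hf.two_mul_cornerSign (r := x) (by omega) (by omega)
  have hsl := hf.step_pred (r := x) (by omega) (by omega)
  have hsr := hf x (by omega)
  exact ⟨x, hax, hxb, by omega, by omega⟩

theorem exists_valley (hf : HasUnitSteps f N)
    (hcorner : ∀ j, 1 ≤ j → j < N → cornerSign f j ≠ -1) :
    ∃ a ≤ N, (∀ x ≤ a, f x = f 0 - x) ∧ (∀ x, a ≤ x → x ≤ N → f x = f 0 - 2 * a + x) := by
  induction N with
  | zero => exact ⟨0, le_rfl, fun x hx => by simp [Nat.le_zero.mp hx],
      fun x _ hx => by simp [Nat.le_zero.mp hx]⟩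
  | succ N ih =>
    obtain ⟨a, haN, hdown, hup⟩ := ih hf.of_succ fun j hj hjN => hcorner j hj (by omega)
    rcases hf N (by omega) with hstep | hstep
    · refine ⟨a, by omega, hdown, fun x hax hx => ?_⟩
      obtain hx' | rfl : x < N + 1 ∨ x = N + 1 := by omega
      · exact hup x hax (by omega)
      · rw [hstep, hup N haN le_rfl]; push_cast; ring
    · -- otherwise the last ascent, at `N`, is followed by a descent: a lower corner
      have ha : a = N := by
        by_contra hne
        have h2c := hf.two_mul_cornerSign (r := N) (by omega) (by omega)
        have hprev := hup (N - 1) (by omega) (by omega)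
        have hcur := hup N (by omega) le_rfl
        push_cast [Nat.cast_sub (show 1 ≤ N by omega)] at hprev
        exact hcorner N (by omega) (by omega) (by omega)
      subst ha
      refine ⟨a + 1, le_rfl, fun x hx => ?_, fun x hax hx => ?_⟩
      · obtain hx' | rfl : x < a + 1 ∨ x = a + 1 := by omega
        · exact hdown x (by omega)
        · rw [hstep, hdown a le_rfl]; push_cast; ring
      · obtain rfl : x = a + 1 := by omega
        rw [hstep, hdown a le_rfl]; push_cast; ring

end HasUnitSteps

/-- What dominance of `m(p)` says about the halves `f`, `g` of a path `p` folded at `x = N`: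
node `j` sits at `x = j` on `f` and at `x = N - j` on `g`. -/
structure IsDominantPair (N : ℕ) (f g : ℕ → ℤ) : Prop where
  left_steps : HasUnitSteps f N
  right_steps : HasUnitSteps g N
  cornerSign_add_nonneg : ∀ j, 1 ≤ j → j < N → 0 ≤ cornerSign f j + cornerSign g (N - j)
  eq_of_lower_corner : ∀ j, 1 ≤ j → j < N →
    (cornerSign f j = -1 ∨ cornerSign g (N - j) = -1) → f j = g (N - j)
  fold_le : f N - f (N - 1) ≤ g 1 - g 0
  fold_eq : f N - f (N - 1) = g 1 - g 0 → f N = g 0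

def mirrorSum (N : ℕ) (f g : ℕ → ℤ) (x : ℕ) : ℤ := f x + g (N - x)

namespace IsDominantPair

variable {N : ℕ} {f g : ℕ → ℤ}

theorem mirrorSum_slope_mono (h : IsDominantPair N f g) {x y : ℕ} (hxy : x ≤ y) (hy : y < N) :
    mirrorSum N f g (x + 1) - mirrorSum N f g x ≤ mirrorSum N f g (y + 1) - mirrorSum N f g y := by
  induction y, hxy using Nat.le_induction with
  | base => exact le_rfl
  | succ y hxy ih =>
    have hf2 := h.left_steps.two_mul_cornerSign (r := y + 1) (by omega) hy
    have hg2 := h.right_steps.two_mul_cornerSign (r := N - (y + 1)) (by omega) (by omega)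
    have hc := h.cornerSign_add_nonneg (y + 1) (by omega) hy
    rw [show N - (y + 1) + 1 = N - y by omega, show N - (y + 1) - 1 = N - (y + 1 + 1) by omega]
      at hg2
    have := ih (by omega)
    simp only [mirrorSum, Nat.add_sub_cancel] at *
    omega

theorem mirrorSum_slope_nonpos (h : IsDominantPair N f g) {x : ℕ} (hx : x < N) :
    mirrorSum N f g (x + 1) - mirrorSum N f g x ≤ 0 := by
  have hmono := h.mirrorSum_slope_mono (x := x) (y := N - 1) (by omega) (by omega)
  have hfold := h.fold_le
  simp only [mirrorSum, Nat.sub_add_cancel (show 1 ≤ N by omega), Nat.sub_self,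
    Nat.sub_sub_self (show 1 ≤ N by omega)] at hmono ⊢
  omega

theorem mirrorSum_eq_of_flat (h : IsDominantPair N f g) {j : ℕ} (hj : j < N)
    (hflat : mirrorSum N f g (j + 1) = mirrorSum N f g j) :
    mirrorSum N f g N = mirrorSum N f g j ∧ f N = g 0 := by
  have hzero : ∀ x, j ≤ x → x < N → mirrorSum N f g (x + 1) = mirrorSum N f g x := fun x hjx hx =>
    le_antisymm (by linarith [h.mirrorSum_slope_nonpos hx])
      (by linarith [h.mirrorSum_slope_mono hjx hx])
  have hconst : ∀ x, j ≤ x → x ≤ N → mirrorSum N f g x = mirrorSum N f g j := by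
    intro x hjx hx
    induction x, hjx using Nat.le_induction with
    | base => rfl
    | succ x hjx ih => rw [hzero x hjx (by omega), ih (by omega)]
  refine ⟨hconst N hj.le le_rfl, h.fold_eq ?_⟩
  have := hzero (N - 1) (by omega) (by omega)
  simp only [mirrorSum, Nat.sub_add_cancel (show 1 ≤ N by omega), Nat.sub_self,
    Nat.sub_sub_self (show 1 ≤ N by omega)] at this
  omega

/-- A lower corner on either half is cancelled by an upper corner on the other half at the
same height, which makes `mirrorSum` flat there; so it sits at the height of the fold. -/
theorem lower_corner_height (h : IsDominantPair N f g) {j : ℕ} (hj : 1 ≤ j) (hjN : j < N)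
    (hc : cornerSign f j = -1 ∨ cornerSign g (N - j) = -1) :
    f j = g 0 ∧ g (N - j) = g 0 ∧ f N = g 0 := by
  have heq := h.eq_of_lower_corner j hj hjN hc
  have hsum := h.cornerSign_add_nonneg j hj hjN
  have hf2 := h.left_steps.two_mul_cornerSign hj hjN
  have hg2 := h.right_steps.two_mul_cornerSign (r := N - j) (by omega) (by omega)
  have hfl := h.left_steps.step_pred hj hjN.le
  have hfr := h.left_steps j hjN
  have hgl := h.right_steps.step_pred (r := N - j) (by omega) (by omega)
  have hgr := h.right_steps (N - j) (by omega)
  rw [show N - j - 1 = N - (j + 1) by omega] at hg2 hgl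
  obtain ⟨hN, hfold⟩ := h.mirrorSum_eq_of_flat hjN (by simp only [mirrorSum]; omega)
  simp only [mirrorSum, Nat.sub_self] at hN
  omega

theorem right_cornerSign_ne_neg_one (h : IsDominantPair N f g) {t : ℕ} (ht : 1 ≤ t)
    (htN : t < N) : cornerSign g t ≠ -1 := by
  intro hct
  have hjt : N - (N - t) = t := by omega
  obtain ⟨hfj, -, hfN⟩ := h.lower_corner_height (j := N - t) (by omega) (by omega)
    (Or.inr (by rwa [hjt]))
  have hsum := h.cornerSign_add_nonneg (N - t) (by omega) (by omega)
  have hf2 := h.left_steps.two_mul_cornerSign (r := N - t) (by omega) (by omega)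
  have hfl := h.left_steps.step_pred (r := N - t) (by omega) (by omega)
  have hfr := h.left_steps (N - t) (by omega)
  rw [hjt] at hsum
  obtain ⟨x, hx, hxN, hcx, hfx⟩ := h.left_steps.exists_cornerSign_eq_neg_one
    (a := N - t) (y := N - t + 1) (b := N) (by omega) (by omega) le_rfl (by omega) (by omega)
  have := (h.lower_corner_height (j := x) (by omega) hxN (Or.inl hcx)).1
  omega

theorem left_cornerSign_ne_neg_one (h : IsDominantPair N f g) {j : ℕ} (hj : 1 ≤ j)
    (hjN : j < N) : cornerSign f j ≠ -1 := by
  intro hcj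
  obtain ⟨-, hgj, -⟩ := h.lower_corner_height hj hjN (Or.inl hcj)
  have hsum := h.cornerSign_add_nonneg j hj hjN
  have hg2 := h.right_steps.two_mul_cornerSign (r := N - j) (by omega) (by omega)
  have hgl := h.right_steps.step_pred (r := N - j) (by omega) (by omega)
  have hgr := h.right_steps (N - j) (by omega)
  obtain ⟨s, hs, hsN, hcs, -⟩ := h.right_steps.exists_cornerSign_eq_neg_one
    (a := 0) (y := N - j - 1) (b := N - j) (by omega) (by omega) (by omega) (by omega) (by omega)
  exact h.right_cornerSign_ne_neg_one hs (by omega) hcs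

theorem eq_of_endpoints (h : IsDominantPair N f g) {i : ℕ} {k : ℤ} (hiN : i < N)
    (hf0 : f 0 = i + k) (hgN : g N = 2 * N - i + k) (hmeet : g 0 ≤ f N) (x : ℕ) (hx : x ≤ N) :
    f x = k + |(x : ℤ) - i| ∧ g x = N - i + k + x := by
  obtain ⟨a, haN, hfdown, hfup⟩ := h.left_steps.exists_valley fun j hj hjN =>
    h.left_cornerSign_ne_neg_one hj hjN
  obtain ⟨b, hbN, hgdown, hgup⟩ := h.right_steps.exists_valley fun t ht htN =>
    h.right_cornerSign_ne_neg_one ht htN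
  have hfN := hfup N haN le_rfl
  have hgN' := hgup N hbN le_rfl
  have hab : a + b ≤ i := by omega
  have hfN₁ : f (N - 1) = f N - 1 := by
    have := hfup (N - 1) (by omega) (by omega)
    push_cast [Nat.cast_sub (show 1 ≤ N by omega)] at this
    omega
  have hb : b = 0 := by
    by_contra hb
    have := hgdown 1 (by omega)
    have := h.fold_le
    omega
  have hg₁ : g 1 = g 0 + 1 := by simpa [hb] using hgup 1 (by omega) (by omega)
  have ha : a = i := by
    have := h.fold_eq (by omega)
    omega
  subst ha hb
  refine ⟨?_, by rw [hgup x (Nat.zero_le x) hx]; simp only [Nat.cast_zero]; omega⟩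
  rcases le_total x a with hxa | hax
  · rw [hfdown x hxa, abs_of_nonpos (by omega)]; omega
  · rw [hfup x hax hx, abs_of_nonneg (by omega)]; omega

end IsDominantPair

theorem seqOf_of_lt {n : ℕ} (y : Fin n → ℤ) {m : ℕ} (h : m < n) : seqOf y m = y ⟨m, h⟩ := by
  simp [seqOf, h]

theorem baseMon_apply (n : ℕ) (LR : (Fin n → ℤ) × (Fin n → ℤ)) (j : ℕ) (ℓ : ℤ) :
    baseMon n LR (j, ℓ) =
      (∑ r ∈ Finset.Icc 1 (n - 2),
        if r = j ∧ seqOf LR.1 r = ℓ then cornerSign (seqOf LR.1) r else 0) +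
      ∑ t ∈ Finset.Icc 1 (n - 2),
        if n - 1 - t = j ∧ seqOf LR.2 t = ℓ then cornerSign (seqOf LR.2) t else 0 := by
  simp [baseMon, Finsupp.single_apply, Prod.ext_iff, eq_comm]

theorem baseMon_apply_of_mem {n : ℕ} {LR : (Fin n → ℤ) × (Fin n → ℤ)} {j : ℕ} (hj : 1 ≤ j)
    (hjn : j ≤ n - 2) (ℓ : ℤ) :
    baseMon n LR (j, ℓ) =
      (if seqOf LR.1 j = ℓ then cornerSign (seqOf LR.1) j else 0) +
      (if seqOf LR.2 (n - 1 - j) = ℓ then cornerSign (seqOf LR.2) (n - 1 - j) else 0) := by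
  rw [baseMon_apply, Finset.sum_eq_single_of_mem j (by simp; omega),
    Finset.sum_eq_single_of_mem (n - 1 - j) (by simp; omega)]
  · simp [show n - 1 - (n - 1 - j) = j by omega]
  · intro t _ ht; simp only [ite_eq_right_iff, and_imp]; omega
  · intro r _ hr; simp [hr]

theorem baseMon_apply_of_le {n : ℕ} (LR : (Fin n → ℤ) × (Fin n → ℤ)) {j : ℕ} (hj : n - 1 ≤ j)
    (ℓ : ℤ) : baseMon n LR (j, ℓ) = 0 := by
  rw [baseMon_apply, Finset.sum_eq_zero, Finset.sum_eq_zero, add_zero] <;>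
  · intro r hr
    simp only [Finset.mem_Icc] at hr
    simp only [ite_eq_right_iff, and_imp]
    omega

theorem apply_eq_zero_of_mem_zMon {n : ℕ} {LR : (Fin n → ℤ) × (Fin n → ℤ)} {z : ExpVec}
    (hz : z ∈ zMon n LR) {j : ℕ} (hj : j < n - 1) (ℓ : ℤ) : z (j, ℓ) = 0 := by
  unfold zMon at hz
  dsimp only at hz
  split_ifs at hz <;>
    simp only [Multiset.mem_singleton, Multiset.insert_eq_cons, Multiset.mem_cons] at hz <;>
    rcases hz with rfl | rfl <;> simp [Finsupp.single_apply] <;> omega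

/-- A dominant fold factor `Z` needs the path to have no lower corner at the fold
(`d₁ ≤ d₂`), and its halves to meet there if it goes straight through. -/
theorem fold_of_mem_zMon {n : ℕ} (hn : 1 ≤ n) {LR : (Fin n → ℤ) × (Fin n → ℤ)} {z : ExpVec}
    (hz : z ∈ zMon n LR) (hzn₁ : ∀ ℓ, 0 ≤ z (n - 1, ℓ)) (hzn : ∀ ℓ, 0 ≤ z (n, ℓ))
    (hd₁ : seqOf LR.1 (n - 1) - seqOf LR.1 (n - 2) = 1 ∨
      seqOf LR.1 (n - 1) - seqOf LR.1 (n - 2) = -1)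
    (hd₂ : seqOf LR.2 1 - seqOf LR.2 0 = 1 ∨ seqOf LR.2 1 - seqOf LR.2 0 = -1) :
    seqOf LR.1 (n - 1) - seqOf LR.1 (n - 2) ≤ seqOf LR.2 1 - seqOf LR.2 0 ∧
      (seqOf LR.1 (n - 1) - seqOf LR.1 (n - 2) = seqOf LR.2 1 - seqOf LR.2 0 →
        seqOf LR.1 (n - 1) = seqOf LR.2 0) := by
  unfold zMon at hz
  dsimp only at hz
  split_ifs at hz with hmeet
  all_goals
    simp only [Multiset.mem_singleton, Multiset.insert_eq_cons, Multiset.mem_cons] at hz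
    try omega
  · have := hzn₁ (seqOf LR.1 (n - 1))
    simp [hz, show n - 1 ≠ n by omega] at this
  all_goals
    rcases hz with rfl | rfl
  all_goals
    have h₁ := hzn₁ (seqOf LR.2 0)
    have h₂ := hzn₁ (seqOf LR.1 (n - 1))
    have h₃ := hzn (seqOf LR.2 0)
    have h₄ := hzn (seqOf LR.1 (n - 1))
    simp [show n - 1 ≠ n by omega, Ne.symm hmeet] at h₁ h₂ h₃ h₄
    omega

theorem add_nonneg_and_eq_of_forall_ite {a b p q : ℤ}
    (h : ∀ ℓ, 0 ≤ (if p = ℓ then a else 0) + (if q = ℓ then b else 0)) :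
    0 ≤ a + b ∧ (a < 0 ∨ b < 0 → p = q) := by
  by_cases hpq : p = q
  · simpa [hpq] using h q
  · have ha := h p
    have hb := h q
    simp only [if_true, if_neg hpq, if_neg (Ne.symm hpq)] at ha hb
    omega

theorem isDominantPair_of_dominant {n : ℕ} {LR : (Fin n → ℤ) × (Fin n → ℤ)} (hn : 2 ≤ n)
    (hL : IsPM LR.1) (hR : IsPM LR.2) {e : ExpVec} (he : e ∈ mMon n LR) (hdom : Dominant e) :
    IsDominantPair (n - 1) (seqOf LR.1) (seqOf LR.2) := by
  obtain ⟨z, hz, rfl⟩ := Multiset.mem_map.mp he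
  have hnode : ∀ j, 1 ≤ j → j < n - 1 → ∀ ℓ, 0 ≤
      (if seqOf LR.1 j = ℓ then cornerSign (seqOf LR.1) j else 0) +
      (if seqOf LR.2 (n - 1 - j) = ℓ then cornerSign (seqOf LR.2) (n - 1 - j) else 0) :=
    fun j hj hjn ℓ => by
      simpa [baseMon_apply_of_mem (LR := LR) hj (by omega), apply_eq_zero_of_mem_zMon hz hjn] using
        hdom (j, ℓ)
  have hfold := fold_of_mem_zMon (by omega) hz
    (fun ℓ => by simpa [baseMon_apply_of_le LR (j := n - 1) le_rfl] using hdom (n - 1, ℓ))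
    (fun ℓ => by simpa [baseMon_apply_of_le LR (j := n) (by omega)] using hdom (n, ℓ))
    (by have := hL (n - 2) (by omega); rw [show n - 2 + 1 = n - 1 by omega] at this; omega)
    (by have := hR 0 (by omega); rw [zero_add] at this; omega)
  rw [← show n - 1 - 1 = n - 2 by omega] at hfold
  exact
    { left_steps := fun x hx => hL x (by omega)
      right_steps := fun x hx => hR x (by omega)
      cornerSign_add_nonneg := fun j hj hjn =>
        (add_nonneg_and_eq_of_forall_ite (hnode j hj hjn)).1
      eq_of_lower_corner := fun j hj hjn hc =>
        (add_nonneg_and_eq_of_forall_ite (hnode j hj hjn)).2 (by omega)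
      fold_le := hfold.1
      fold_eq := hfold.2 }

/-- `p⁺_{i,k}`: the left half descends from `i + k` to its only corner at `(i, k)`, the right
half ascends straight from the fold. -/
def highestPath (n i : ℕ) (k : ℤ) : (Fin n → ℤ) × (Fin n → ℤ) :=
  (fun r => k + |(r : ℤ) - i|, fun t => n - 1 - i + k + t)

section highestPath

variable {n i : ℕ} {k : ℤ}

theorem seqOf_highestPath_fst {x : ℕ} (hx : x < n) :
    seqOf (highestPath n i k).1 x = k + |(x : ℤ) - i| := by
  simp [seqOf_of_lt _ hx, highestPath]

theorem seqOf_highestPath_snd {x : ℕ} (hx : x < n) :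
    seqOf (highestPath n i k).2 x = n - 1 - i + k + x := by
  simp [seqOf_of_lt _ hx, highestPath]

theorem pathCond_highestPath (hn : 1 ≤ n) : PathCond n i k (highestPath n i k) := by
  refine ⟨fun x hx => ?_, fun x hx => ?_, ?_, ?_, ?_⟩
  · rw [seqOf_highestPath_fst hx, seqOf_highestPath_fst (by omega)]
    rcases le_or_gt i x with hix | hix
    · rw [abs_of_nonneg (by omega), abs_of_nonneg (by omega)]; omega
    · rw [abs_of_nonpos (by omega), abs_of_nonpos (by omega)]; omega
  · rw [seqOf_highestPath_snd hx, seqOf_highestPath_snd (by omega)]; omega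
  · rw [seqOf_highestPath_fst (by omega)]; simp [abs_of_nonneg]; ring
  · rw [seqOf_highestPath_snd (by omega)]; omega
  · rw [seqOf_highestPath_fst (by omega), seqOf_highestPath_snd (by omega)]
    have := le_abs_self ((((n - 1 : ℕ)) : ℤ) - i)
    omega

theorem cornerSign_highestPath_fst {j : ℕ} (hj : 1 ≤ j) (hjn : j + 1 < n) :
    cornerSign (seqOf (highestPath n i k).1) j = if j = i then 1 else 0 := by
  have hprev := seqOf_highestPath_fst (n := n) (i := i) (k := k) (x := j - 1) (by omega)
  have hcur := seqOf_highestPath_fst (n := n) (i := i) (k := k) (x := j) (by omega)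
  have hnext := seqOf_highestPath_fst (n := n) (i := i) (k := k) (x := j + 1) (by omega)
  rcases abs_cases (((j - 1 : ℕ) : ℤ) - i) with h₁ | h₁ <;>
  rcases abs_cases ((j : ℤ) - i) with h₂ | h₂ <;>
  rcases abs_cases (((j + 1 : ℕ) : ℤ) - i) with h₃ | h₃ <;>
  · unfold cornerSign
    split_ifs <;> omega

theorem cornerSign_highestPath_snd {t : ℕ} (ht : 1 ≤ t) (htn : t + 1 < n) :
    cornerSign (seqOf (highestPath n i k).2) t = 0 := by
  have hprev := seqOf_highestPath_snd (n := n) (i := i) (k := k) (x := t - 1) (by omega)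
  have hcur := seqOf_highestPath_snd (n := n) (i := i) (k := k) (x := t) (by omega)
  have hnext := seqOf_highestPath_snd (n := n) (i := i) (k := k) (x := t + 1) (by omega)
  unfold cornerSign
  split_ifs <;> omega

theorem baseMon_highestPath (hi : 1 ≤ i) (hin : i ≤ n - 2) :
    baseMon n (highestPath n i k) = Finsupp.single (i, k) 1 := by
  unfold baseMon
  rw [Finset.sum_eq_single_of_mem i (by simp; omega), Finset.sum_eq_zero, add_zero,
    cornerSign_highestPath_fst hi (by omega), if_pos rfl, seqOf_highestPath_fst (by omega)]
  · simp
  · intro t ht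
    simp only [Finset.mem_Icc] at ht
    rw [cornerSign_highestPath_snd ht.1 (by omega), zero_smul]
  · intro j hj hji
    simp only [Finset.mem_Icc] at hj
    rw [cornerSign_highestPath_fst hj.1 (by omega), if_neg hji, zero_smul]

theorem zMon_highestPath (hn : 2 ≤ n) (hin : i ≤ n - 2) : zMon n (highestPath n i k) = {0} := by
  have h₁ := seqOf_highestPath_fst (n := n) (i := i) (k := k) (x := n - 1) (by omega)
  have h₂ := seqOf_highestPath_fst (n := n) (i := i) (k := k) (x := n - 2) (by omega)
  have h₃ := seqOf_highestPath_snd (n := n) (i := i) (k := k) (x := 0) (by omega)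
  have h₄ := seqOf_highestPath_snd (n := n) (i := i) (k := k) (x := 1) (by omega)
  rw [abs_of_nonneg (by omega)] at h₁
  rw [abs_of_nonneg (by omega)] at h₂
  unfold zMon
  dsimp only
  split_ifs <;> first | rfl | omega

theorem mMon_highestPath (hi : 1 ≤ i) (hin : i ≤ n - 2) :
    mMon n (highestPath n i k) = {Finsupp.single (i, k) 1} := by
  simp [mMon, baseMon_highestPath hi hin, zMon_highestPath (by omega) hin]

end highestPath

theorem eq_highestPath_of_dominant {n i : ℕ} {k : ℤ} {LR : (Fin n → ℤ) × (Fin n → ℤ)}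
    (hn : 2 ≤ n) (hin : i ≤ n - 2) (hLR : PathCond n i k LR) {e : ExpVec} (he : e ∈ mMon n LR)
    (hdom : Dominant e) : LR = highestPath n i k := by
  obtain ⟨hL, hR, hf0, hgN, hmeet⟩ := hLR
  have hval := (isDominantPair_of_dominant hn hL hR he hdom).eq_of_endpoints (by omega) hf0
    (by rw [hgN]; push_cast [Nat.cast_sub (show 1 ≤ n by omega)]; ring) hmeet
  refine Prod.ext (funext fun r => ?_) (funext fun t => ?_)
  · simpa [seqOf_of_lt _ r.isLt, highestPath] using (hval r (by omega)).1
  · have := (hval t (by omega)).2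
    simp only [seqOf_of_lt _ t.isLt, Nat.cast_sub (show 1 ≤ n by omega)] at this
    simp [highestPath, this]

/-- `Y_{j,ℓ}^c ↦ Y_{j,-ℓ}^{-c}`. -/
noncomputable def expDual : ExpVec ≃+ ExpVec :=
  (Finsupp.domCongr (Equiv.prodCongr (Equiv.refl ℕ) (Equiv.neg ℤ))).trans (AddEquiv.neg ExpVec)

@[simp]
theorem expDual_apply (e : ExpVec) (j : ℕ) (ℓ : ℤ) : expDual e (j, ℓ) = -e (j, -ℓ) := by
  simp [expDual, Finsupp.domCongr_apply, Finsupp.equivMapDomain_apply]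

@[simp]
theorem expDual_single (j : ℕ) (ℓ c : ℤ) :
    expDual (Finsupp.single (j, ℓ) c) = Finsupp.single (j, -ℓ) (-c) := by
  simp [expDual, Finsupp.domCongr_apply, Finsupp.equivMapDomain_single]

theorem dominant_expDual_iff (e : ExpVec) : Dominant (expDual e) ↔ AntiDominant e := by
  refine ⟨fun h ⟨j, ℓ⟩ => ?_, fun h ⟨j, ℓ⟩ => ?_⟩
  · simpa using h (j, -ℓ)
  · simpa using h (j, -ℓ)

theorem cornerSign_neg_reflect {f g : ℕ → ℤ} {N r : ℕ} (hr : 1 ≤ r) (hrN : r < N)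
    (hfg : ∀ x, r - 1 ≤ x → x ≤ r + 1 → g x = -f (N - x)) :
    cornerSign g r = -cornerSign f (N - r) := by
  have h₀ := hfg r (by omega) (by omega)
  have h₁ := hfg (r - 1) le_rfl (by omega)
  have h₂ := hfg (r + 1) (by omega) le_rfl
  rw [show N - (r - 1) = N - r + 1 by omega] at h₁
  rw [show N - (r + 1) = N - r - 1 by omega] at h₂
  unfold cornerSign
  split_ifs <;> omega

/-- Reflection about the fold `x = n - 1` followed by negation of heights; it exchanges the
two halves. -/
def pathDual {n : ℕ} (LR : (Fin n → ℤ) × (Fin n → ℤ)) : (Fin n → ℤ) × (Fin n → ℤ) :=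
  (fun r => -LR.2 r.rev, fun t => -LR.1 t.rev)

theorem seqOf_pathDual_fst {n : ℕ} (LR : (Fin n → ℤ) × (Fin n → ℤ)) {m : ℕ} (hm : m < n) :
    seqOf (pathDual LR).1 m = -seqOf LR.2 (n - 1 - m) := by
  rw [seqOf_of_lt _ hm, seqOf_of_lt _ (by omega)]
  simp [pathDual, Fin.rev, Nat.sub_sub, add_comm]

theorem seqOf_pathDual_snd {n : ℕ} (LR : (Fin n → ℤ) × (Fin n → ℤ)) {m : ℕ} (hm : m < n) :
    seqOf (pathDual LR).2 m = -seqOf LR.1 (n - 1 - m) := by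
  rw [seqOf_of_lt _ hm, seqOf_of_lt _ (by omega)]
  simp [pathDual, Fin.rev, Nat.sub_sub, add_comm]

@[simp]
theorem pathDual_pathDual {n : ℕ} (LR : (Fin n → ℤ) × (Fin n → ℤ)) :
    pathDual (pathDual LR) = LR := by
  simp [pathDual]

theorem pathCond_pathDual {n i : ℕ} {k : ℤ} {LR : (Fin n → ℤ) × (Fin n → ℤ)} (hn : 1 ≤ n)
    (h : PathCond n i k LR) : PathCond n i (2 - 2 * n - k) (pathDual LR) := by
  obtain ⟨hL, hR, hL0, hRn, hmeet⟩ := h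
  refine ⟨fun j hj => ?_, fun j hj => ?_, ?_, ?_, ?_⟩
  · have := hR (n - 2 - j) (by omega)
    rw [seqOf_pathDual_fst LR hj, seqOf_pathDual_fst LR (by omega),
      show n - 2 - j + 1 = n - 1 - j by omega, show n - 1 - (j + 1) = n - 2 - j by omega] at *
    omega
  · have := hL (n - 2 - j) (by omega)
    rw [seqOf_pathDual_snd LR hj, seqOf_pathDual_snd LR (by omega),
      show n - 2 - j + 1 = n - 1 - j by omega, show n - 1 - (j + 1) = n - 2 - j by omega] at *
    omega
  · rw [seqOf_pathDual_fst LR (by omega), Nat.sub_zero]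
    omega
  · rw [seqOf_pathDual_snd LR (by omega), Nat.sub_self]
    omega
  · rw [seqOf_pathDual_snd LR (by omega), seqOf_pathDual_fst LR (by omega), Nat.sub_zero,
      Nat.sub_self]
    omega

theorem baseMon_pathDual {n : ℕ} (LR : (Fin n → ℤ) × (Fin n → ℤ)) :
    baseMon n (pathDual LR) = expDual (baseMon n LR) := by
  have hcorner₁ : ∀ r ∈ Finset.Icc 1 (n - 2), cornerSign (seqOf (pathDual LR).1) r =
      -cornerSign (seqOf LR.2) (n - 1 - r) := fun r hr => by
    simp only [Finset.mem_Icc] at hr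
    exact cornerSign_neg_reflect (by omega) (by omega) fun x _ hx =>
      seqOf_pathDual_fst LR (by omega)
  have hcorner₂ : ∀ r ∈ Finset.Icc 1 (n - 2), cornerSign (seqOf (pathDual LR).2) r =
      -cornerSign (seqOf LR.1) (n - 1 - r) := fun r hr => by
    simp only [Finset.mem_Icc] at hr
    exact cornerSign_neg_reflect (by omega) (by omega) fun x _ hx =>
      seqOf_pathDual_snd LR (by omega)
  unfold baseMon
  rw [map_add, map_sum, map_sum, add_comm]
  congr 1
  · refine Finset.sum_nbij' (fun r => n - 1 - r) (fun r => n - 1 - r) ?_ ?_ ?_ ?_ ?_ <;>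
      simp only [Finset.mem_Icc] <;> try omega
    intro r hr
    rw [hcorner₂ r (Finset.mem_Icc.mpr hr), seqOf_pathDual_snd LR (by omega)]
    simp [Finsupp.smul_single]
  · refine Finset.sum_nbij' (fun r => n - 1 - r) (fun r => n - 1 - r) ?_ ?_ ?_ ?_ ?_ <;>
      simp only [Finset.mem_Icc] <;> try omega
    intro r hr
    rw [hcorner₁ r (Finset.mem_Icc.mpr hr), seqOf_pathDual_fst LR (by omega)]
    simp [Finsupp.smul_single, show n - 1 - (n - 1 - r) = r by omega]

theorem zMon_pathDual {n : ℕ} (hn : 2 ≤ n) (LR : (Fin n → ℤ) × (Fin n → ℤ)) :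
    zMon n (pathDual LR) = (zMon n LR).map expDual := by
  have e₁ := seqOf_pathDual_fst LR (m := n - 1) (by omega)
  have e₂ := seqOf_pathDual_fst LR (m := n - 2) (by omega)
  have e₃ := seqOf_pathDual_snd LR (m := 0) (by omega)
  have e₄ := seqOf_pathDual_snd LR (m := 1) (by omega)
  rw [Nat.sub_self] at e₁
  rw [show n - 1 - (n - 2) = 1 by omega] at e₂
  rw [Nat.sub_zero] at e₃
  rw [show n - 1 - 1 = n - 2 by omega] at e₄
  unfold zMon
  dsimp only
  rw [e₁, e₂, e₃, e₄]
  generalize seqOf LR.1 (n - 2) = a, seqOf LR.1 (n - 1) = b, seqOf LR.2 0 = c,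
    seqOf LR.2 1 = d
  simp only [neg_sub_neg, neg_inj]
  split_ifs <;> simp only [Multiset.map_singleton, Multiset.insert_eq_cons, Multiset.map_cons,
    map_add, map_neg, map_zero, map_zsmul, expDual_single, Finsupp.single_neg, smul_neg,
    neg_smul, neg_neg, sub_eq_add_neg] <;> try omega
  all_goals first
    | (subst_vars; rfl)
    | (simp only [add_comm]; done)
    | (refine (Multiset.pair_comm _ _).trans ?_; simp only [add_comm]; rfl)

theorem mMon_pathDual {n : ℕ} (hn : 2 ≤ n) (LR : (Fin n → ℤ) × (Fin n → ℤ)) :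
    mMon n (pathDual LR) = (mMon n LR).map expDual := by
  simp only [mMon, zMon_pathDual hn, baseMon_pathDual, Multiset.map_map]
  exact Multiset.map_congr rfl fun z _ => (map_add expDual _ z).symm

/-- `p⁻_{i,k}`. -/
def lowestPath (n i : ℕ) (k : ℤ) : (Fin n → ℤ) × (Fin n → ℤ) :=
  pathDual (highestPath n i (2 - 2 * n - k))

theorem eq_lowestPath_of_antiDominant {n i : ℕ} {k : ℤ} {LR : (Fin n → ℤ) × (Fin n → ℤ)}
    (hn : 2 ≤ n) (hin : i ≤ n - 2) (hLR : PathCond n i k LR) {e : ExpVec} (he : e ∈ mMon n LR)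
    (hanti : AntiDominant e) : LR = lowestPath n i k := by
  have hdual := eq_highestPath_of_dominant hn hin (pathCond_pathDual (by omega) hLR)
    (by rw [mMon_pathDual hn]; exact Multiset.mem_map_of_mem _ he)
    ((dominant_expDual_iff e).2 hanti)
  rw [lowestPath, ← hdual, pathDual_pathDual]

theorem pathCond_lowestPath {n i : ℕ} {k : ℤ} (hn : 1 ≤ n) :
    PathCond n i k (lowestPath n i k) := by
  simpa [lowestPath] using
    pathCond_pathDual hn (pathCond_highestPath (i := i) (k := 2 - 2 * n - k) hn)

theorem mMon_lowestPath {n i : ℕ} {k : ℤ} (hi : 1 ≤ i) (hin : i ≤ n - 2) :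
    mMon n (lowestPath n i k) = {Finsupp.single (i, 2 * n - 2 + k) (-1)} := by
  rw [lowestPath, mMon_pathDual (by omega), mMon_highestPath hi hin, Multiset.map_singleton,
    expDual_single, show -(2 - 2 * (n : ℤ) - k) = 2 * n - 2 + k by ring]

theorem statement17_general (n i : ℕ) (k : ℤ) (hi1 : 1 ≤ i) (hi2 : i ≤ n - 2) :
    (∃! p : {LR : (Fin n → ℤ) × (Fin n → ℤ) // PathCond n i k LR},
      Finsupp.single ((i : ℕ), k) (1 : ℤ) ∈ mMon n p.1) ∧
    (∀ (p : {LR : (Fin n → ℤ) × (Fin n → ℤ) // PathCond n i k LR}) (e : ExpVec),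
      e ∈ mMon n p.1 → Dominant e → e = Finsupp.single ((i : ℕ), k) (1 : ℤ)) ∧
    (∃! p : {LR : (Fin n → ℤ) × (Fin n → ℤ) // PathCond n i k LR},
      Finsupp.single ((i : ℕ), 2 * (n : ℤ) - 2 + k) (-1 : ℤ) ∈ mMon n p.1) ∧
    (∀ (p : {LR : (Fin n → ℤ) × (Fin n → ℤ) // PathCond n i k LR}) (e : ExpVec),
      e ∈ mMon n p.1 → AntiDominant e →
        e = Finsupp.single ((i : ℕ), 2 * (n : ℤ) - 2 + k) (-1 : ℤ)) := by
  have hdom : Dominant (Finsupp.single (i, k) 1) := fun x => Finsupp.single_nonneg.2 zero_le_one x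
  have hanti : AntiDominant (Finsupp.single (i, 2 * (n : ℤ) - 2 + k) (-1)) := fun x =>
    Finsupp.single_nonpos.2 (by norm_num) x
  refine ⟨⟨⟨highestPath n i k, pathCond_highestPath (by omega)⟩, ?_, fun p hp => ?_⟩,
    fun p e he hd => ?_, ⟨⟨lowestPath n i k, pathCond_lowestPath (by omega)⟩, ?_, fun p hp => ?_⟩,
    fun p e he hd => ?_⟩
  · simp [mMon_highestPath hi1 hi2]
  · exact Subtype.ext (eq_highestPath_of_dominant (by omega) hi2 p.2 hp hdom)
  · rwa [eq_highestPath_of_dominant (by omega) hi2 p.2 he hd, mMon_highestPath hi1 hi2,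
      Multiset.mem_singleton] at he
  · simp [mMon_lowestPath hi1 hi2]
  · exact Subtype.ext (eq_lowestPath_of_antiDominant (by omega) hi2 p.2 hp hanti)
  · rwa [eq_lowestPath_of_antiDominant (by omega) hi2 p.2 he hd, mMon_lowestPath hi1 hi2,
      Multiset.mem_singleton] at he

/-- Section 5: among the monomials `m(p)`, `p ∈ 𝒫_{i,k}` (for `1 ≤ i ≤ n-2`, `i - k`
odd), there is exactly one dominant monomial, namely `Y_{i,k}`, arising from a unique
path (the highest path `p⁺_{i,k}`), and exactly one anti-dominant monomial, namely
`Y^{-1}_{i,2n-2+k}`, arising from a unique path (the lowest path `p⁻_{i,k}`). -/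
theorem statement17 (n i : ℕ) (k : ℤ) (hn : 4 ≤ n) (hi1 : 1 ≤ i) (hi2 : i ≤ n - 2)
    (hik : Odd ((i : ℤ) - k)) :
    (∃! p : {LR : (Fin n → ℤ) × (Fin n → ℤ) // PathCond n i k LR},
      Finsupp.single ((i : ℕ), k) (1 : ℤ) ∈ mMon n p.1) ∧
    (∀ (p : {LR : (Fin n → ℤ) × (Fin n → ℤ) // PathCond n i k LR}) (e : ExpVec),
      e ∈ mMon n p.1 → Dominant e → e = Finsupp.single ((i : ℕ), k) (1 : ℤ)) ∧
    (∃! p : {LR : (Fin n → ℤ) × (Fin n → ℤ) // PathCond n i k LR},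
      Finsupp.single ((i : ℕ), 2 * (n : ℤ) - 2 + k) (-1 : ℤ) ∈ mMon n p.1) ∧
    (∀ (p : {LR : (Fin n → ℤ) × (Fin n → ℤ) // PathCond n i k LR}) (e : ExpVec),
      e ∈ mMon n p.1 → AntiDominant e →
        e = Finsupp.single ((i : ℕ), 2 * (n : ℤ) - 2 + k) (-1 : ℤ)) :=
  statement17_general n i k hi1 hi2
end
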